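/- arXiv:1502.07326 — 3 statements merged into one kernel-verified Lean document; each statement's English description precedes it below -/
import Mathlib

section
/- Pavelka completeness of RFAL: if L is rationally closed and satisfies ⨆_{i∈I}(a → b_i) = a → ⨆_{i∈I} b_i for all a and all families {b_i}, then for every theory Σ and every rational fuzzy attribute implication A ⇒ B one has |A⇒B|_Σ = ||A⇒B||_Σ; in particular this holds when (⊗,→) are the standard Łukasiewicz or the standard product (Goguen) operations. -/
/- Common framework for Rational Fuzzy Attribute Logic (RFAL):
   truth degrees in the real unit interval, fuzzy sets, subsethood,
   the deductive system (axioms, Cut, Mul), provability and semantic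
   entailment degrees, and the least-model iteration. -/

open scoped Classical
noncomputable section

instance : Fact ((0:ℝ) ≤ 1) := ⟨zero_le_one⟩

/-- The real unit interval, used as the set of truth degrees. -/
abbrev UI := unitInterval

/-- Standard Łukasiewicz conjunction: a ⊗_Ł b = max(0, a+b-1). -/
def lukMul (a b : UI) : UI :=
  ⟨max 0 (a.1 + b.1 - 1), Set.mem_Icc.mpr ⟨le_max_left _ _,
    max_le zero_le_one (by have ha := a.2.2; have hb := b.2.2; linarith)⟩⟩

/-- Standard Łukasiewicz residuum: a →_Ł b = min(1, 1-a+b). -/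
def lukImp (a b : UI) : UI :=
  ⟨min 1 (1 - a.1 + b.1), Set.mem_Icc.mpr
    ⟨le_min zero_le_one (by have ha := a.2.2; have hb := b.2.1; linarith), min_le_left _ _⟩⟩

/-- Standard product (Goguen) conjunction: a ⊗_Π b = a·b. -/
def prodMul (a b : UI) : UI := a * b

/-- Standard product (Goguen) residuum: a →_Π b = 1 if a ≤ b, else b/a. -/
def prodImp (a b : UI) : UI :=
  if h : a ≤ b then 1 else
    ⟨b.1 / a.1, Set.mem_Icc.mpr ⟨div_nonneg b.2.1 a.2.1,
      div_le_one_of_le₀ (le_of_lt (Subtype.coe_lt_coe.mpr (not_le.mp h))) a.2.1⟩⟩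

/-- Gödel conjunction: minimum. -/
def godMul (a b : UI) : UI := a ⊓ b

/-- Gödel residuum: a → b = 1 if a ≤ b, else b. -/
def godImp (a b : UI) : UI := if a ≤ b then 1 else b

/-- A structure of truth degrees on [0,1]: a commutative monoid ⟨[0,1],⊗,1⟩
    with ⊗ and → adjoint, and ⊗ distributing over arbitrary suprema
    (the lattice structure is the natural complete linear order of [0,1]). -/
structure RStr where
  mul : UI → UI → UI
  imp : UI → UI → UI
  mul_comm : ∀ a b, mul a b = mul b a
  mul_assoc : ∀ a b c, mul (mul a b) c = mul a (mul b c)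
  mul_one : ∀ a, mul a 1 = a
  adjoint : ∀ a b c, mul a b ≤ c ↔ a ≤ imp b c
  mul_iSup : ∀ (ι : Type) (a : UI) (b : ι → UI), mul a (⨆ i, b i) = ⨆ i, mul a (b i)

/-- A degree in [0,1] is rational. -/
def IsRatUI (x : UI) : Prop := ∃ q : ℚ, (x : ℝ) = q

/-- L is rationally closed: ⊗ and → of rational degrees are rational. -/
def RStr.RationallyClosed (L : RStr) : Prop :=
  ∀ a b, IsRatUI a → IsRatUI b → IsRatUI (L.mul a b) ∧ IsRatUI (L.imp a b)

/-- Condition ⨆_i (a → b_i) = a → ⨆_i b_i for all a and all families {b_i}. -/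
def RStr.ImpSupDistrib (L : RStr) : Prop :=
  ∀ (ι : Type) (a : UI) (b : ι → UI), (⨆ i, L.imp a (b i)) = L.imp a (⨆ i, b i)

variable {V : Type}

/-- A fuzzy set is finite: only finitely many elements get nonzero degree. -/
def FinSet (A : V → UI) : Prop := {p | A p ≠ 0}.Finite

/-- A fuzzy set is rational: all its values are rational. -/
def RatSet (A : V → UI) : Prop := ∀ p, IsRatUI (A p)

/-- Union of fuzzy sets: pointwise supremum. -/
def funion (A B : V → UI) : V → UI := fun p => A p ⊔ B p

/-- c-multiple of a fuzzy set: pointwise ⊗ by c. -/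
def csmul (L : RStr) (c : UI) (A : V → UI) : V → UI := fun p => L.mul c (A p)

/-- Subsethood degree S(A,B) = ⨅_p (A(p) → B(p)). -/
def Subdeg (L : RStr) (A B : V → UI) : UI := ⨅ p, L.imp (A p) (B p)

/-- The deductive system of RFAL: axioms A∪B ⇒ B (A, B finite rational),
    rule (Cut): from A⇒B and B∪C⇒D infer A∪C⇒D, and
    rule (Mul): from A⇒B infer c⊗A ⇒ c⊗B for rational c. -/
inductive Proves (L : RStr) (T : Set ((V → UI) × (V → UI))) : (V → UI) → (V → UI) → Prop
  | ax : ∀ A B, FinSet A → RatSet A → FinSet B → RatSet B →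
      Proves L T (funion A B) B
  | hyp : ∀ A B, (A, B) ∈ T → Proves L T A B
  | cut : ∀ A B C D, Proves L T A B → Proves L T (funion B C) D →
      Proves L T (funion A C) D
  | mul : ∀ A B c, IsRatUI c → Proves L T A B →
      Proves L T (csmul L c A) (csmul L c B)

/-- Provability degree |A⇒B|_Σ = ⨆{c rational : Σ ⊢ A ⇒ c⊗B}. -/
def provDeg (L : RStr) (T : Set ((V → UI) × (V → UI))) (A B : V → UI) : UI :=
  sSup {c : UI | IsRatUI c ∧ Proves L T A (csmul L c B)}

/-- Truth degree ||A⇒B||_e = S(A,e) → S(B,e). -/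
def truthDeg (L : RStr) (e A B : V → UI) : UI :=
  L.imp (Subdeg L A e) (Subdeg L B e)

/-- e is a model of Σ: every formula of Σ is fully true under e. -/
def IsModel (L : RStr) (T : Set ((V → UI) × (V → UI))) (e : V → UI) : Prop :=
  ∀ AB ∈ T, truthDeg L e AB.1 AB.2 = 1

/-- Semantic entailment degree ||A⇒B||_Σ = ⨅{||A⇒B||_e : e model of Σ}. -/
def semDeg (L : RStr) (T : Set ((V → UI) × (V → UI))) (A B : V → UI) : UI :=
  ⨅ e ∈ {e : V → UI | IsModel L T e}, truthDeg L e A B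

/-- A theory: a set of rational fuzzy attribute implications, i.e.
    pairs of finite rational fuzzy sets. -/
def IsTheory (T : Set ((V → UI) × (V → UI))) : Prop :=
  ∀ AB ∈ T, FinSet AB.1 ∧ RatSet AB.1 ∧ FinSet AB.2 ∧ RatSet AB.2

/-- The iteration e⁰_Σ = e, e^{n+1}_Σ = e^n_Σ ∪ ⋃{S(A,e^n_Σ) ⊗ B : A⇒B ∈ Σ}. -/
def iter (L : RStr) (T : Set ((V → UI) × (V → UI))) (e : V → UI) : ℕ → (V → UI)
  | 0 => e
  | n + 1 => fun p => iter L T e n p ⊔ ⨆ AB ∈ T, L.mul (Subdeg L AB.1 (iter L T e n)) (AB.2 p)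

/-- e^ω_Σ = ⋃_{n<ω} e^n_Σ. -/
def omegaIter (L : RStr) (T : Set ((V → UI) × (V → UI))) (e : V → UI) : V → UI :=
  fun p => ⨆ n, iter L T e n p

/-- An L-closure operator: extensive, monotone w.r.t. subsethood degrees,
    and idempotent. -/
def IsClosureOp {U : Type} (L : RStr) (C : (U → UI) → (U → UI)) : Prop :=
  (∀ A u, A u ≤ C A u) ∧ (∀ A B, Subdeg L A B ≤ Subdeg L (C A) (C B)) ∧
  (∀ A, C (C A) = C A)

/-- A finitary operator: C(A) = ⋃{C(B) : B ⊆ A, B finite}. -/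
def FinitaryOp {U : Type} (C : (U → UI) → (U → UI)) : Prop :=
  ∀ A : U → UI, C A = fun u => ⨆ B ∈ {B : U → UI | (∀ v, B v ≤ A v) ∧ FinSet B}, C B u

/-- A rational operator: C(A) = ⋃{C(B) : B ⊑ A}, B finite and rational. -/
def RationalOp {U : Type} (C : (U → UI) → (U → UI)) : Prop :=
  ∀ A : U → UI, C A =
    fun u => ⨆ B ∈ {B : U → UI | (∀ v, B v ≤ A v) ∧ FinSet B ∧ RatSet B}, C B u

/-- Singleton fuzzy set {a/p}. -/
def sing (p : V) (a : UI) : V → UI := fun v => if v = p then a else 0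
namespace UIHelp

lemma zero_le' (x : UI) : (0:UI) ≤ x := unitInterval.nonneg'
lemma le_one' (x : UI) : x ≤ (1:UI) := unitInterval.le_one'

lemma lt_iSup {ι : Sort*} {f : ι → UI} {c : UI} (h : c < ⨆ i, f i) : ∃ i, c < f i := by
  by_contra hc; push_neg at hc; exact absurd (iSup_le hc) (not_le.mpr h)

lemma lt_of_lt_sup {c x y : UI} (h : c < x ⊔ y) (hx : ¬ c < x) : c < y := by
  rcases lt_or_ge c y with h' | h'
  · exact h'
  · exact absurd (sup_le (not_lt.mp hx) h') (not_le.mpr h)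

lemma lt_inf {c x y : UI} (hx : c < x) (hy : c < y) : c < x ⊓ y := by
  rcases le_total x y with h | h
  · rwa [inf_eq_left.mpr h]
  · rwa [inf_eq_right.mpr h]

lemma coe_iSup {ι : Type*} [Nonempty ι] (f : ι → UI) : ((⨆ i, f i : UI) : ℝ) = ⨆ i, (f i : ℝ) := by
  have hbdd : BddAbove (Set.range fun i => (f i : ℝ)) := ⟨1, by rintro _ ⟨i, rfl⟩; exact (f i).2.2⟩
  have hS0 : 0 ≤ ⨆ i, (f i : ℝ) := le_ciSup_of_le hbdd (Classical.arbitrary ι) (f _).2.1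
  have hS1 : (⨆ i, (f i : ℝ)) ≤ 1 := ciSup_le fun i => (f i).2.2
  apply le_antisymm
  · have h1 : (⨆ i, f i) ≤ (⟨_, hS0, hS1⟩ : UI) :=
      iSup_le fun i => Subtype.coe_le_coe.mp (by exact le_ciSup hbdd i)
    exact Subtype.coe_le_coe.mpr h1
  · exact ciSup_le fun i => Subtype.coe_le_coe.mpr (le_iSup f i)

lemma coe_sup (x y : UI) : ((x ⊔ y : UI) : ℝ) = max (x:ℝ) (y:ℝ) := by
  rcases le_total x y with h | h
  · rw [show x ⊔ y = y from sup_eq_right.mpr h, max_eq_right (Subtype.coe_le_coe.mpr h)]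
  · rw [show x ⊔ y = x from sup_eq_left.mpr h, max_eq_left (Subtype.coe_le_coe.mpr h)]

lemma rat_btwn {x y : UI} (h : x < y) : ∃ r : UI, IsRatUI r ∧ x < r ∧ r < y := by
  obtain ⟨q, hq1, hq2⟩ := exists_rat_btwn (Subtype.coe_lt_coe.mpr h)
  exact ⟨⟨q, le_trans x.2.1 hq1.le, le_trans hq2.le y.2.2⟩, ⟨q, rfl⟩,
    Subtype.coe_lt_coe.mp hq1, Subtype.coe_lt_coe.mp hq2⟩

lemma rat_zero : IsRatUI 0 := ⟨0, by norm_num⟩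

lemma sup_rat {x y : UI} (hx : IsRatUI x) (hy : IsRatUI y) : IsRatUI (x ⊔ y) := by
  rcases le_total x y with h | h
  · rwa [sup_eq_right.mpr h]
  · rwa [sup_eq_left.mpr h]

lemma top_eq_one : (⊤ : UI) = 1 := le_antisymm (le_one' _) le_top

lemma lt_finset_inf {V : Type*} {F : Finset V} {f : V → UI} {c : UI} (h1 : c < 1)
    (h : ∀ p ∈ F, c < f p) : c < F.inf f := by
  classical
  induction F using Finset.induction_on with
  | empty => simpa [top_eq_one] using h1
  | @insert a s ha ih =>
      rw [Finset.inf_insert]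
      exact lt_inf (h a (Finset.mem_insert_self a s))
        (ih fun p hp => h p (Finset.mem_insert_of_mem hp))

lemma le_sSup_of_rat_lt {s : UI} {S : Set UI} (hS : ∀ r : UI, IsRatUI r → r < s → r ∈ S)
    (h0 : (0:UI) ∈ S) : s ≤ sSup S := by
  by_contra hc
  push_neg at hc
  obtain ⟨r, hr, h1, h2⟩ := rat_btwn hc
  exact absurd (le_sSup (hS r hr h2)) (not_le.mpr h1)

end UIHelp

open UIHelp


open UIHelp

namespace RStr
variable (L : RStr)

lemma one_mul' (a : UI) : L.mul 1 a = a := by rw [L.mul_comm]; exact L.mul_one a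

lemma mul_sup (a x y : UI) : L.mul a (x ⊔ y) = L.mul a x ⊔ L.mul a y := by
  have h1 : (⨆ i : Bool, (if i then x else y)) = x ⊔ y := by rw [iSup_bool_eq]; simp
  have h2 : (⨆ i : Bool, L.mul a (if i then x else y)) = L.mul a x ⊔ L.mul a y := by
    rw [iSup_bool_eq]; simp
  rw [← h1, L.mul_iSup, h2]

lemma mul_mono {b c : UI} (a : UI) (h : b ≤ c) : L.mul a b ≤ L.mul a c := by
  rw [show c = b ⊔ c from (sup_eq_right.mpr h).symm, L.mul_sup]
  exact le_sup_left

lemma mul_mono_left {b c : UI} (a : UI) (h : b ≤ c) : L.mul b a ≤ L.mul c a := by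
  rw [L.mul_comm b a, L.mul_comm c a]; exact L.mul_mono a h

lemma mul_imp_le (a b : UI) : L.mul (L.imp a b) a ≤ b := (L.adjoint _ _ _).mpr le_rfl

lemma imp_mono {b c : UI} (a : UI) (h : b ≤ c) : L.imp a b ≤ L.imp a c :=
  (L.adjoint _ _ _).mp (le_trans (L.mul_imp_le a b) h)

lemma imp_anti {a b : UI} (c : UI) (h : a ≤ b) : L.imp b c ≤ L.imp a c :=
  (L.adjoint _ _ _).mp (le_trans (L.mul_mono _ h) (L.mul_imp_le b c))

lemma le_imp_iff {a b c : UI} : a ≤ L.imp b c ↔ L.mul a b ≤ c := (L.adjoint a b c).symm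

lemma imp_eq_one_iff {a b : UI} : L.imp a b = 1 ↔ a ≤ b := by
  constructor
  · intro h
    have := L.mul_imp_le a b
    rwa [h, L.one_mul'] at this
  · intro h
    refine le_antisymm (le_one' _) ((L.adjoint _ _ _).mp ?_)
    rwa [L.one_mul']

lemma one_imp (b : UI) : L.imp 1 b = b := by
  apply le_antisymm
  · have := L.mul_imp_le 1 b; rwa [L.mul_one] at this
  · exact (L.adjoint _ _ _).mp (by rw [L.mul_one])

lemma mul_zero' (a : UI) : L.mul a 0 = 0 := by
  have h1 : (⨆ i : Empty, (fun x : Empty => (0:UI)) i) = (0:UI) := by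
    apply le_antisymm (iSup_le fun i => i.elim) (zero_le' _)
  calc L.mul a 0 = L.mul a (⨆ i : Empty, (fun _ => (0:UI)) i) := by rw [h1]
    _ = ⨆ i : Empty, L.mul a ((fun _ => (0:UI)) i) := L.mul_iSup _ _ _
    _ = 0 := le_antisymm (iSup_le fun i => i.elim) (zero_le' _)

lemma zero_mul' (a : UI) : L.mul 0 a = 0 := by rw [L.mul_comm]; exact L.mul_zero' a

lemma zero_imp (b : UI) : L.imp 0 b = 1 :=
  L.imp_eq_one_iff.mpr (zero_le' _)

end RStr

section Sound
variable {V : Type} (L : RStr)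

lemma le_subdeg_iff {c : UI} {A B : V → UI} :
    c ≤ Subdeg L A B ↔ ∀ p, L.mul c (A p) ≤ B p := by
  rw [Subdeg, le_iInf_iff]
  constructor
  · intro h p; exact (L.adjoint c (A p) (B p)).mpr (h p)
  · intro h p; exact (L.adjoint c (A p) (B p)).mp (h p)

lemma subdeg_eq_one {A B : V → UI} (h : ∀ p, A p ≤ B p) : Subdeg L A B = 1 := by
  apply le_antisymm (UIHelp.le_one' _)
  apply (le_subdeg_iff L).mpr
  intro p
  rw [L.one_mul']
  exact h p

lemma subdeg_le_imp {A B : V → UI} (p : V) : Subdeg L A B ≤ L.imp (A p) (B p) := iInf_le _ p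

lemma sound {T : Set ((V → UI) × (V → UI))} {X Y : V → UI} (hP : Proves L T X Y)
    {e : V → UI} (he : IsModel L T e) : Subdeg L X e ≤ Subdeg L Y e := by
  induction hP with
  | ax A B hAf hAr hBf hBr =>
      have hc := (le_subdeg_iff L).mp (le_refl (Subdeg L (funion A B) e))
      apply (le_subdeg_iff L).mpr
      intro p
      exact le_trans (L.mul_mono _ le_sup_right) (hc p)
  | hyp A B hAB =>
      exact L.imp_eq_one_iff.mp (he _ hAB)
  | cut A B C D h1 h2 ih1 ih2 =>
      set c := Subdeg L (funion A C) e with hc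
      have h0 := (le_subdeg_iff L).mp (le_refl c)
      have h0' : ∀ p, L.mul c (A p) ⊔ L.mul c (C p) ≤ e p := fun p =>
        (show L.mul c (funion A C p) = L.mul c (A p) ⊔ L.mul c (C p) from
          L.mul_sup c (A p) (C p)) ▸ h0 p
      have hA : c ≤ Subdeg L A e := (le_subdeg_iff L).mpr fun p =>
        le_trans le_sup_left (h0' p)
      have hC : ∀ p, L.mul c (C p) ≤ e p := fun p => le_trans le_sup_right (h0' p)
      have hB : ∀ p, L.mul c (B p) ≤ e p := fun p =>
        (le_subdeg_iff L).mp (le_trans hA ih1) p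
      have hBC : c ≤ Subdeg L (funion B C) e := (le_subdeg_iff L).mpr fun p => by
        show L.mul c (B p ⊔ C p) ≤ e p
        rw [L.mul_sup]
        exact sup_le (hB p) (hC p)
      exact le_trans hBC ih2
  | mul A B c hc h ih =>
      set d := Subdeg L (csmul L c A) e with hd
      have h0 := (le_subdeg_iff L).mp (le_refl d)
      have h1 : L.mul d c ≤ Subdeg L A e := (le_subdeg_iff L).mpr fun p => by
        rw [L.mul_assoc]; exact h0 p
      have h2 := (le_subdeg_iff L).mp (le_trans h1 ih)
      apply (le_subdeg_iff L).mpr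
      intro p
      rw [show csmul L c B p = L.mul c (B p) from rfl, ← L.mul_assoc]
      exact h2 p

lemma prov_le_sem {T : Set ((V → UI) × (V → UI))} {A B : V → UI} :
    provDeg L T A B ≤ semDeg L T A B := by
  apply sSup_le
  rintro c ⟨hcr, hps⟩
  apply le_iInf₂
  intro e he
  rw [truthDeg, ← L.adjoint]
  have h1 : Subdeg L A e ≤ Subdeg L (csmul L c B) e := sound L hps he
  set d := Subdeg L (csmul L c B) e with hd
  have h2 : L.mul c d ≤ Subdeg L B e := (le_subdeg_iff L).mpr fun p => by
    have h0 := (le_subdeg_iff L).mp (le_refl d) p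
    rw [show csmul L c B p = L.mul c (B p) from rfl] at h0
    calc L.mul (L.mul c d) (B p) = L.mul d (L.mul c (B p)) := by
          rw [L.mul_comm c d, L.mul_assoc]
      _ ≤ e p := h0
  exact le_trans (L.mul_mono c h1) h2

end Sound

section Rules
variable {V : Type} (L : RStr)

lemma funion_fin {A B : V → UI} (hA : FinSet A) (hB : FinSet B) : FinSet (funion A B) := by
  apply Set.Finite.subset (hA.union hB)
  intro p hp
  by_contra hc
  simp only [Set.mem_union, Set.mem_setOf_eq, not_or, not_not] at hc
  exact hp (by show A p ⊔ B p = 0; rw [hc.1, hc.2, sup_idem])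

lemma funion_rat {A B : V → UI} (hA : RatSet A) (hB : RatSet B) : RatSet (funion A B) :=
  fun p => UIHelp.sup_rat (hA p) (hB p)

lemma csmul_fin {c : UI} {A : V → UI} (hA : FinSet A) : FinSet (csmul L c A) := by
  apply Set.Finite.subset hA
  intro p hp
  by_contra hc
  simp only [Set.mem_setOf_eq, not_not] at hc
  exact hp (by show L.mul c (A p) = 0; rw [hc, L.mul_zero'])

lemma csmul_rat {c : UI} {A : V → UI} (hRC : L.RationallyClosed) (hc : IsRatUI c)
    (hA : RatSet A) : RatSet (csmul L c A) :=
  fun p => (hRC c (A p) hc (hA p)).1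

lemma sing_fin (p : V) (a : UI) : FinSet (sing p a) := by
  apply Set.Finite.subset (Set.finite_singleton p)
  intro q hq
  simp only [Set.mem_setOf_eq, sing] at hq
  by_contra hne
  simp only [Set.mem_singleton_iff] at hne
  simp [hne] at hq

lemma sing_rat {a : UI} (p : V) (ha : IsRatUI a) : RatSet (sing p a) := by
  intro q
  unfold sing
  split
  · exact ha
  · exact UIHelp.rat_zero

lemma zf_fin : FinSet (fun _ : V => (0:UI)) := by
  apply Set.Finite.subset (Set.finite_empty)
  intro p hp
  simp at hp

lemma zf_rat : RatSet (fun _ : V => (0:UI)) := fun _ => UIHelp.rat_zero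

lemma funion_absorb {A X : V → UI} (h : ∀ p, X p ≤ A p) : funion A X = A := by
  funext p
  exact sup_eq_left.mpr (h p)

lemma funion_zf (A : V → UI) : funion A (fun _ => 0) = A :=
  funion_absorb fun p => UIHelp.zero_le' _

variable {T : Set ((V → UI) × (V → UI))}

lemma ptrans {A X Y : V → UI} (h1 : Proves L T A X) (h2 : Proves L T X Y) :
    Proves L T A Y := by
  have h2' : Proves L T (funion X (fun _ => 0)) Y := by rwa [funion_zf]
  have := Proves.cut A X (fun _ => 0) Y h1 h2'
  rwa [funion_zf] at this

lemma pweaken {A X Y : V → UI} (h1 : Proves L T A X)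
    (hXf : FinSet X) (hXr : RatSet X) (hYf : FinSet Y) (hYr : RatSet Y)
    (hle : ∀ p, Y p ≤ X p) : Proves L T A Y := by
  have ax1 : Proves L T (funion X Y) Y := Proves.ax X Y hXf hXr hYf hYr
  rw [funion_absorb hle] at ax1
  exact ptrans L h1 ax1

lemma punion {A X Y : V → UI} (hAf : FinSet A) (hAr : RatSet A)
    (hXf : FinSet X) (hXr : RatSet X) (hYf : FinSet Y) (hYr : RatSet Y)
    (h1 : Proves L T A X) (h2 : Proves L T A Y) : Proves L T A (funion X Y) := by
  have s1 : Proves L T (funion A (funion X Y)) (funion X Y) :=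
    Proves.ax A (funion X Y) hAf hAr (funion_fin hXf hYf) (funion_rat hXr hYr)
  have e1 : funion Y (funion A X) = funion A (funion X Y) := by
    funext p
    show Y p ⊔ (A p ⊔ X p) = A p ⊔ (X p ⊔ Y p)
    rw [sup_comm (Y p), sup_assoc]
  rw [← e1] at s1
  have s2 := Proves.cut A Y (funion A X) (funion X Y) h2 s1
  have e2 : funion A (funion A X) = funion A X := by
    funext p
    show A p ⊔ (A p ⊔ X p) = A p ⊔ X p
    rw [← sup_assoc, sup_idem]
  rw [e2] at s2
  have e3 : funion X A = funion A X := by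
    funext p; exact sup_comm _ _
  rw [← e3] at s2
  have s3 := Proves.cut A X A (funion X Y) h1 s2
  have e4 : funion A A = A := by funext p; exact sup_idem _
  rwa [e4] at s3

lemma punionFin {A : V → UI} (hAf : FinSet A) (hAr : RatSet A)
    (F : Finset V) :
    ∀ (G : V → UI), (∀ p, G p ≠ 0 → p ∈ F) → RatSet G →
      (∀ p ∈ F, Proves L T A (sing p (G p))) → Proves L T A G := by
  classical
  induction F using Finset.induction_on with
  | empty =>
      intro G hsupp _ _
      have : G = fun _ => 0 := by
        funext p
        by_contra hc
        exact absurd (hsupp p hc) (Finset.notMem_empty p)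
      rw [this]
      have : Proves L T (funion A (fun _ => (0:UI))) (fun _ => (0:UI)) :=
        Proves.ax A (fun _ => (0:UI)) hAf hAr zf_fin zf_rat
      rwa [funion_zf] at this
  | @insert a s ha ih =>
      intro G hsupp hGr hprf
      set G' : V → UI := fun q => if q = a then 0 else G q with hG'
      have hG'supp : ∀ p, G' p ≠ 0 → p ∈ s := by
        intro p hp
        rw [hG'] at hp
        by_cases hpa : p = a
        · simp [hpa] at hp
        · simp only [if_neg hpa] at hp
          rcases Finset.mem_insert.mp (hsupp p hp) with h | h
          · exact absurd h hpa
          · exact h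
      have hG'r : RatSet G' := by
        intro p
        rw [hG']
        by_cases hpa : p = a
        · simp only [if_pos hpa]; exact UIHelp.rat_zero
        · simp only [if_neg hpa]; exact hGr p
      have h1 : Proves L T A G' := by
        apply ih G' hG'supp hG'r
        intro p hp
        have hpa : p ≠ a := fun hc => ha (hc ▸ hp)
        have : G' p = G p := by rw [hG']; simp [hpa]
        rw [this]
        exact hprf p (Finset.mem_insert_of_mem hp)
      have h2 : Proves L T A (sing a (G a)) := hprf a (Finset.mem_insert_self a s)
      have hG'f : FinSet G' := Set.Finite.subset s.finite_toSet (fun p hp => hG'supp p hp)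
      have h3 := punion L hAf hAr (sing_fin a (G a)) (sing_rat a (hGr a)) hG'f hG'r h2 h1
      have e1 : funion (sing a (G a)) G' = G := by
        funext p
        show sing a (G a) p ⊔ G' p = G p
        by_cases hpa : p = a
        · subst hpa
          rw [hG']
          simp only [sing, if_pos rfl]
          exact sup_eq_left.mpr (UIHelp.zero_le' _)
        · rw [hG']
          simp only [sing, if_neg hpa]
          exact sup_eq_right.mpr (UIHelp.zero_le' _)
      rwa [e1] at h3

end Rules

section Iter
variable {V : Type} (L : RStr) (T : Set ((V → UI) × (V → UI)))

lemma iter_mono {e : V → UI} {m n : ℕ} (h : m ≤ n) (p : V) :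
    iter L T e m p ≤ iter L T e n p := by
  induction n with
  | zero => rw [Nat.le_zero.mp h]
  | succ k ih =>
      rcases Nat.lt_or_ge m (k+1) with h' | h'
      · exact le_trans (ih (Nat.lt_succ_iff.mp h')) (le_sup_left :
          iter L T e k p ≤ iter L T e (k+1) p)
      · rw [Nat.le_antisymm h h']

lemma supLemma (hN : ∀ (ι : Type) (_ : Nonempty ι) (a : UI) (b : ι → UI),
      (⨆ i, L.imp a (b i)) = L.imp a (⨆ i, b i))
    {e B : V → UI} (hBf : FinSet B) :
    Subdeg L B (omegaIter L T e) ≤ ⨆ n, Subdeg L B (iter L T e n) := by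
  classical
  set R := ⨆ n, Subdeg L B (iter L T e n) with hRdef
  by_contra hcon
  push_neg at hcon
  have hR1 : R < 1 := lt_of_lt_of_le hcon (UIHelp.le_one' _)
  have hex : ∀ p, ∃ n, R < L.imp (B p) (iter L T e n p) := by
    intro p
    have h1 : R < L.imp (B p) (omegaIter L T e p) :=
      lt_of_lt_of_le hcon (subdeg_le_imp L p)
    rw [show omegaIter L T e p = ⨆ n, iter L T e n p from rfl,
      ← hN ℕ ⟨0⟩ (B p) (fun n => iter L T e n p)] at h1
    exact UIHelp.lt_iSup h1
  choose nn hnn using hex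
  set F := hBf.toFinset with hF
  set N := F.sup nn with hN2
  have hall : ∀ p, R < L.imp (B p) (iter L T e N p) := by
    intro p
    by_cases hp : p ∈ F
    · exact lt_of_lt_of_le (hnn p) (L.imp_mono _ (iter_mono L T (Finset.le_sup hp) p))
    · have hB0 : B p = 0 := by
        by_contra hc
        exact hp (hBf.mem_toFinset.mpr hc)
      rw [hB0, L.zero_imp]
      exact hR1
  have h2 : R < F.inf (fun p => L.imp (B p) (iter L T e N p)) :=
    UIHelp.lt_finset_inf hR1 fun p _ => hall p
  have h3 : F.inf (fun p => L.imp (B p) (iter L T e N p)) ≤ Subdeg L B (iter L T e N) := by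
    apply le_iInf
    intro p
    by_cases hp : p ∈ F
    · exact Finset.inf_le hp
    · have hB0 : B p = 0 := by
        by_contra hc
        exact hp (hBf.mem_toFinset.mpr hc)
      rw [hB0, L.zero_imp]
      exact UIHelp.le_one' _
  exact absurd (le_iSup (fun n => Subdeg L B (iter L T e n)) N)
    (not_le.mpr (lt_of_lt_of_le h2 h3))

lemma omega_model (hN : ∀ (ι : Type) (_ : Nonempty ι) (a : UI) (b : ι → UI),
      (⨆ i, L.imp a (b i)) = L.imp a (⨆ i, b i))
    (hT : IsTheory T) (e : V → UI) : IsModel L T (omegaIter L T e) := by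
  intro Q hQ
  apply L.imp_eq_one_iff.mpr
  apply (le_subdeg_iff L).mpr
  intro p
  have h1 : Subdeg L Q.1 (omegaIter L T e) ≤ ⨆ n, Subdeg L Q.1 (iter L T e n) :=
    supLemma L T hN (hT Q hQ).1
  have h2 : L.mul (Q.2 p) (⨆ n, Subdeg L Q.1 (iter L T e n))
      = ⨆ n, L.mul (Q.2 p) (Subdeg L Q.1 (iter L T e n)) :=
    L.mul_iSup ℕ (Q.2 p) _
  calc L.mul (Subdeg L Q.1 (omegaIter L T e)) (Q.2 p)
      ≤ L.mul (⨆ n, Subdeg L Q.1 (iter L T e n)) (Q.2 p) := L.mul_mono_left _ h1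
    _ = ⨆ n, L.mul (Q.2 p) (Subdeg L Q.1 (iter L T e n)) := by rw [L.mul_comm]; exact h2
    _ ≤ omegaIter L T e p := by
        apply iSup_le
        intro n
        rw [L.mul_comm]
        have h3 : L.mul (Subdeg L Q.1 (iter L T e n)) (Q.2 p) ≤ iter L T e (n+1) p := by
          refine le_trans ?_ (le_sup_right : _ ≤ iter L T e n p ⊔ _)
          exact le_iSup₂ (f := fun (AB : (V → UI) × (V → UI)) (_ : AB ∈ T) =>
            L.mul (Subdeg L AB.1 (iter L T e n)) (AB.2 p)) Q hQ
        exact le_trans h3 (le_iSup (fun n => iter L T e n p) (n+1))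

end Iter

section Key
variable {V : Type} (L : RStr) (T : Set ((V → UI) × (V → UI)))

lemma csmul_sing (c : UI) (p : V) (a : UI) :
    csmul L c (sing p a) = sing p (L.mul c a) := by
  funext q
  show L.mul c (sing p a q) = sing p (L.mul c a) q
  unfold sing
  by_cases hq : q = p
  · simp [hq]
  · simp [hq, L.mul_zero']

lemma keyClaim (hRC : L.RationallyClosed)
    (hN : ∀ (ι : Type) (_ : Nonempty ι) (a : UI) (b : ι → UI),
      (⨆ i, L.imp a (b i)) = L.imp a (⨆ i, b i))
    (hT : IsTheory T) {A : V → UI} (hAf : FinSet A) (hAr : RatSet A) :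
    ∀ (n : ℕ) (E : V → UI), FinSet E → RatSet E → ∀ c : UI, IsRatUI c →
      c < Subdeg L E (iter L T A n) → Proves L T A (csmul L c E) := by
  classical
  intro n
  induction n with
  | zero =>
      intro E hEf hEr c hc hlt
      have hle : ∀ p, csmul L c E p ≤ A p := fun p =>
        (le_subdeg_iff L).mp (le_of_lt hlt) p
      have hax : Proves L T (funion A (csmul L c E)) (csmul L c E) :=
        Proves.ax A (csmul L c E) hAf hAr (csmul_fin L hEf) (csmul_rat L hRC hc hEr)
      rwa [funion_absorb hle] at hax
  | succ n IH =>
      intro E hEf hEr c hc hlt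
      have hc1 : c < 1 := lt_of_lt_of_le hlt (UIHelp.le_one' _)
      apply punionFin L hAf hAr hEf.toFinset (csmul L c E)
      · intro p hp
        apply hEf.mem_toFinset.mpr
        intro hE0
        exact hp (by show L.mul c (E p) = 0; rw [hE0, L.mul_zero'])
      · exact csmul_rat L hRC hc hEr
      · intro p _
        have hcp : c < L.imp (E p) (iter L T A (n+1) p) :=
          lt_of_lt_of_le hlt (subdeg_le_imp L p)
        by_cases h1 : c < L.imp (E p) (iter L T A n p)
        · -- point handled at level n via a singleton
          have hge : L.imp (E p) (iter L T A n p) ⊓ 1 ≤ Subdeg L (sing p (E p)) (iter L T A n) := by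
            apply le_iInf
            intro q
            by_cases hq : q = p
            · subst hq
              simp only [sing, if_pos rfl]
              exact inf_le_left
            · simp only [sing, if_neg hq, L.zero_imp]
              exact inf_le_right
          have hlt' : c < Subdeg L (sing p (E p)) (iter L T A n) :=
            lt_of_lt_of_le (UIHelp.lt_inf h1 hc1) hge
          have := IH (sing p (E p)) (sing_fin p (E p)) (sing_rat p (hEr p)) c hc hlt'
          rwa [csmul_sing] at this
        · -- point comes from the theory layer
          set Sup := ⨆ AB ∈ T, L.mul (Subdeg L AB.1 (iter L T A n)) (AB.2 p) with hSup
          have himp2 : L.imp (E p) (iter L T A n p ⊔ Sup)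
              = L.imp (E p) (iter L T A n p) ⊔ L.imp (E p) Sup := by
            have e1 : (⨆ i : Bool, (if i then iter L T A n p else Sup)) = iter L T A n p ⊔ Sup := by
              rw [iSup_bool_eq]; simp
            have e2 := hN Bool ⟨true⟩ (E p) (fun i => if i then iter L T A n p else Sup)
            rw [e1] at e2
            rw [← e2, iSup_bool_eq]
            simp
          have h2 : c < L.imp (E p) (iter L T A n p) ⊔ L.imp (E p) Sup := by
            rw [← himp2]
            exact hcp
          have h3 : c < L.imp (E p) Sup := UIHelp.lt_of_lt_sup h2 h1
          have hTne : Nonempty ↥T := by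
            by_contra hT0
            have hSup0 : Sup ≤ 0 := by
              rw [hSup]
              apply iSup_le; intro AB; apply iSup_le; intro hmem
              exact absurd (Nonempty.intro (⟨AB, hmem⟩ : ↥T)) hT0
            have : L.imp (E p) Sup ≤ L.imp (E p) (iter L T A n p) :=
              L.imp_mono _ (le_trans hSup0 (UIHelp.zero_le' _))
            exact h1 (lt_of_lt_of_le h3 this)
          have hSup' : Sup = ⨆ x : ↥T, L.mul (Subdeg L x.1.1 (iter L T A n)) (x.1.2 p) := by
            rw [hSup, iSup_subtype']
          have h4 : c < ⨆ x : ↥T, L.imp (E p) (L.mul (Subdeg L x.1.1 (iter L T A n)) (x.1.2 p)) := by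
            rw [hN ↥T hTne (E p) _, ← hSup']
            exact h3
          obtain ⟨x, hx⟩ := UIHelp.lt_iSup h4
          obtain ⟨Q, hmem⟩ := x
          simp only at hx
          set s' := Subdeg L Q.1 (iter L T A n) with hs'
          have hs'pos : 0 < s' := by
            by_contra hs0
            have : s' = 0 := le_antisymm (not_lt.mp hs0) (UIHelp.zero_le' _)
            rw [this, L.zero_mul'] at hx
            have : L.imp (E p) 0 ≤ L.imp (E p) (iter L T A n p) :=
              L.imp_mono _ (UIHelp.zero_le' _)
            exact h1 (lt_of_lt_of_le hx this)
          have hRne : Nonempty {r : UI // IsRatUI r ∧ r < s'} :=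
            ⟨⟨0, UIHelp.rat_zero, hs'pos⟩⟩
          have hR : s' = ⨆ r : {r : UI // IsRatUI r ∧ r < s'}, (r.1 : UI) := by
            apply le_antisymm
            · by_contra hc2
              push_neg at hc2
              obtain ⟨r, hr, h1', h2'⟩ := UIHelp.rat_btwn hc2
              exact absurd (le_iSup (fun r : {r : UI // IsRatUI r ∧ r < s'} => r.1)
                ⟨r, hr, h2'⟩) (not_le.mpr h1')
            · exact iSup_le fun r => le_of_lt r.2.2
          have hmul : L.mul s' (Q.2 p) = ⨆ r : {r : UI // IsRatUI r ∧ r < s'}, L.mul r.1 (Q.2 p) := by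
            conv_lhs => rw [L.mul_comm, hR]
            rw [L.mul_iSup]
            exact iSup_congr fun r => L.mul_comm _ _
          rw [hmul, ← hN _ hRne (E p) _] at hx
          obtain ⟨r, hr⟩ := UIHelp.lt_iSup hx
          obtain ⟨hQ1f, hQ1r, hQ2f, hQ2r⟩ := hT Q hmem
          have p1 : Proves L T A (csmul L r.1 Q.1) := IH Q.1 hQ1f hQ1r r.1 r.2.1 r.2.2
          have p2 : Proves L T Q.1 Q.2 := Proves.hyp Q.1 Q.2 (by simpa using hmem)
          have p3 : Proves L T (csmul L r.1 Q.1) (csmul L r.1 Q.2) :=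
            Proves.mul Q.1 Q.2 r.1 r.2.1 p2
          have p4 : Proves L T A (csmul L r.1 Q.2) := ptrans L p1 p3
          have hle : ∀ q, sing p (L.mul c (E p)) q ≤ csmul L r.1 Q.2 q := by
            intro q
            unfold sing
            by_cases hq : q = p
            · subst hq
              simp only [if_pos rfl]
              exact (L.adjoint _ _ _).mpr (le_of_lt hr)
            · simp only [if_neg hq]
              exact UIHelp.zero_le' _
          exact pweaken L p4 (csmul_fin L hQ2f) (csmul_rat L hRC r.2.1 hQ2r)
            (sing_fin p _) (sing_rat p (hRC c (E p) hc (hEr p)).1) hle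

end Key

section Standard

lemma luk_rc : ∀ a b : UI, IsRatUI a → IsRatUI b → IsRatUI (lukMul a b) ∧ IsRatUI (lukImp a b) := by
  rintro a b ⟨qa, ha⟩ ⟨qb, hb⟩
  constructor
  · refine ⟨max 0 (qa + qb - 1), ?_⟩
    show max 0 (a.1 + b.1 - 1) = ((max 0 (qa + qb - 1) : ℚ) : ℝ)
    rw [ha, hb]
    push_cast
    rfl
  · refine ⟨min 1 (1 - qa + qb), ?_⟩
    show min 1 (1 - a.1 + b.1) = ((min 1 (1 - qa + qb) : ℚ) : ℝ)
    rw [ha, hb]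
    push_cast
    rfl

lemma prod_rc : ∀ a b : UI, IsRatUI a → IsRatUI b → IsRatUI (prodMul a b) ∧ IsRatUI (prodImp a b) := by
  rintro a b ⟨qa, ha⟩ ⟨qb, hb⟩
  constructor
  · refine ⟨qa * qb, ?_⟩
    show a.1 * b.1 = ((qa * qb : ℚ) : ℝ)
    rw [ha, hb]; push_cast; rfl
  · unfold prodImp
    split
    · exact ⟨1, by norm_num⟩
    · refine ⟨qb / qa, ?_⟩
      show b.1 / a.1 = ((qb / qa : ℚ) : ℝ)
      rw [ha, hb]; push_cast; rfl

lemma luk_nid (ι : Type) (hι : Nonempty ι) (a : UI) (b : ι → UI) :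
    (⨆ i, lukImp a (b i)) = lukImp a (⨆ i, b i) := by
  apply Subtype.ext
  rw [UIHelp.coe_iSup]
  show (⨆ i, min 1 (1 - a.1 + (b i).1)) = min 1 (1 - a.1 + ((⨆ i, b i : UI) : ℝ))
  rw [UIHelp.coe_iSup]
  have hbdd : BddAbove (Set.range fun i => ((b i : UI) : ℝ)) :=
    ⟨1, by rintro _ ⟨i, rfl⟩; exact (b i).2.2⟩
  have hbdd2 : BddAbove (Set.range fun i => min 1 (1 - a.1 + (b i).1)) :=
    ⟨1, by rintro _ ⟨i, rfl⟩; exact min_le_left _ _⟩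
  apply le_antisymm
  · apply ciSup_le
    intro i
    exact min_le_min le_rfl (by linarith [le_ciSup hbdd i])
  · set M := ⨆ i, min 1 (1 - a.1 + (b i).1) with hM
    rcases le_or_gt 1 M with h1 | h1
    · exact le_trans (min_le_left _ _) h1
    · have hb2 : ∀ i, (b i).1 ≤ M - 1 + a.1 := by
        intro i
        have h2 : min 1 (1 - a.1 + (b i).1) ≤ M := le_ciSup hbdd2 i
        rcases le_or_gt 1 (1 - a.1 + (b i).1) with h3 | h3
        · rw [min_eq_left h3] at h2
          exact absurd h2 (not_le.mpr h1)
        · rw [min_eq_right h3.le] at h2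
          linarith
      have h4 : (⨆ i, (b i : UI).1) ≤ M - 1 + a.1 := ciSup_le hb2
      exact le_trans (min_le_right _ _) (by linarith)

lemma prodImp_coe (a b : UI) : ((prodImp a b : UI) : ℝ) = if a ≤ b then 1 else b.1 / a.1 := by
  unfold prodImp
  split <;> simp_all

lemma prod_nid (ι : Type) (hι : Nonempty ι) (a : UI) (b : ι → UI) :
    (⨆ i, prodImp a (b i)) = prodImp a (⨆ i, b i) := by
  have hbdd : BddAbove (Set.range fun i => ((b i : UI) : ℝ)) :=
    ⟨1, by rintro _ ⟨i, rfl⟩; exact (b i).2.2⟩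
  have hsupcoe : ((⨆ i, b i : UI) : ℝ) = ⨆ i, ((b i : UI) : ℝ) := UIHelp.coe_iSup b
  by_cases ha0 : a = 0
  · subst ha0
    have h1 : ∀ i, prodImp 0 (b i) = 1 := fun i => by
      unfold prodImp; rw [dif_pos (UIHelp.zero_le' _)]
    have h2 : prodImp 0 (⨆ i, b i) = 1 := by
      unfold prodImp; rw [dif_pos (UIHelp.zero_le' _)]
    rw [h2]
    calc (⨆ i, prodImp 0 (b i)) = ⨆ _ : ι, (1:UI) := by exact iSup_congr h1
      _ = 1 := iSup_const
  · have hapos : (0:ℝ) < a.1 := lt_of_le_of_ne a.2.1 (fun hc => ha0 (Subtype.ext hc.symm))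
    rcases le_or_gt a (⨆ i, b i) with hle | hlt
    · -- RHS = 1
      have hR : prodImp a (⨆ i, b i) = 1 := by unfold prodImp; rw [dif_pos hle]
      rw [hR]
      apply le_antisymm (UIHelp.le_one' _)
      by_cases hex : ∃ i, a ≤ b i
      · obtain ⟨i, hi⟩ := hex
        have : prodImp a (b i) = 1 := by unfold prodImp; rw [dif_pos hi]
        calc (1:UI) = prodImp a (b i) := this.symm
          _ ≤ ⨆ i, prodImp a (b i) := le_iSup (fun i => prodImp a (b i)) i
      · push_neg at hex
        have heq : a = ⨆ i, b i := le_antisymm hle (iSup_le fun i => (hex i).le)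
        -- show coe of LHS is ≥ 1
        have hcoe : ((⨆ i, prodImp a (b i) : UI) : ℝ) = ⨆ i, (b i).1 / a.1 := by
          rw [UIHelp.coe_iSup]
          apply iSup_congr
          intro i
          rw [prodImp_coe, if_neg (not_le.mpr (hex i))]
        apply Subtype.coe_le_coe.mp
        rw [hcoe]
        have hdiv : (⨆ i, (b i).1 / a.1) = (⨆ i, (b i).1) / a.1 := by
          simp only [div_eq_mul_inv]
          rw [← Real.iSup_mul_of_nonneg (by positivity)]
        rw [hdiv, ← hsupcoe, ← heq]
        rw [div_self (ne_of_gt hapos)]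
        norm_num
    · -- all b i < a
      have hbi : ∀ i, ¬ a ≤ b i := fun i hc =>
        absurd (le_trans hc (le_iSup b i)) (not_le.mpr hlt)
      apply Subtype.ext
      rw [UIHelp.coe_iSup, prodImp_coe, if_neg (not_le.mpr hlt)]
      have : ∀ i, ((prodImp a (b i) : UI) : ℝ) = (b i).1 / a.1 := fun i => by
        rw [prodImp_coe, if_neg (hbi i)]
      calc (⨆ i, ((prodImp a (b i) : UI) : ℝ)) = ⨆ i, (b i).1 / a.1 := iSup_congr this
        _ = (⨆ i, (b i).1) / a.1 := by
            simp only [div_eq_mul_inv]; rw [← Real.iSup_mul_of_nonneg (by positivity)]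
        _ = ((⨆ i, b i : UI) : ℝ) / a.1 := by rw [hsupcoe]

end Standard

/-- Pavelka completeness of RFAL. If L is rationally closed and
    satisfies the sup-distributivity of →, then |A⇒B|_Σ = ||A⇒B||_Σ; in
    particular this holds when (⊗,→) are the standard Łukasiewicz or the
    standard product (Goguen) operations. -/
theorem pavelka_completeness_RFAL {V : Type} [Countable V] (L : RStr)
    (h : (L.RationallyClosed ∧ L.ImpSupDistrib) ∨
      (L.mul = lukMul ∧ L.imp = lukImp) ∨ (L.mul = prodMul ∧ L.imp = prodImp))
    (T : Set ((V → UI) × (V → UI))) (hT : IsTheory T)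
    (A B : V → UI) (hAf : FinSet A) (hAr : RatSet A) (hBf : FinSet B) (hBr : RatSet B) :
    provDeg L T A B = semDeg L T A B := by
  obtain ⟨hRC, hN⟩ : L.RationallyClosed ∧ (∀ (ι : Type) (_ : Nonempty ι) (a : UI) (b : ι → UI),
      (⨆ i, L.imp a (b i)) = L.imp a (⨆ i, b i)) := by
    rcases h with ⟨hRC, hD⟩ | ⟨hm, hi⟩ | ⟨hm, hi⟩
    · exact ⟨hRC, fun ι _ a b => hD ι a b⟩
    · refine ⟨?_, ?_⟩
      · intro a b ha hb; rw [hm, hi]; exact luk_rc a b ha hb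
      · intro ι hι a b; rw [hi]; exact luk_nid ι hι a b
    · refine ⟨?_, ?_⟩
      · intro a b ha hb; rw [hm, hi]; exact prod_rc a b ha hb
      · intro ι hι a b; rw [hi]; exact prod_nid ι hι a b
  apply le_antisymm (prov_le_sem L)
  have hmodel : IsModel L T (omegaIter L T A) := omega_model L T hN hT A
  have step1 : semDeg L T A B ≤ truthDeg L (omegaIter L T A) A B :=
    iInf₂_le (omegaIter L T A) hmodel
  have hA1 : Subdeg L A (omegaIter L T A) = 1 :=
    subdeg_eq_one L fun p => le_iSup (fun n => iter L T A n p) 0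
  have step2 : truthDeg L (omegaIter L T A) A B = Subdeg L B (omegaIter L T A) := by
    rw [truthDeg, hA1, L.one_imp]
  have step3 : Subdeg L B (omegaIter L T A) ≤ provDeg L T A B := by
    apply UIHelp.le_sSup_of_rat_lt
    · intro r hr hrlt
      have h5 : Subdeg L B (omegaIter L T A) ≤ ⨆ n, Subdeg L B (iter L T A n) :=
        supLemma L T hN hBf
      obtain ⟨n, hn⟩ := UIHelp.lt_iSup (lt_of_lt_of_le hrlt h5)
      exact ⟨hr, keyClaim L T hRC hN hT hAf hAr n B hBf hBr r hr hn⟩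
    · refine ⟨UIHelp.rat_zero, ?_⟩
      have hz : csmul L 0 B = fun _ => (0:UI) := by
        funext p; exact L.zero_mul' _
      rw [hz]
      have hax : Proves L T (funion A (fun _ => (0:UI))) (fun _ => (0:UI)) :=
        Proves.ax A (fun _ => (0:UI)) hAf hAr zf_fin zf_rat
      rwa [funion_zf] at hax
  calc semDeg L T A B ≤ truthDeg L (omegaIter L T A) A B := step1
    _ = Subdeg L B (omegaIter L T A) := step2
    _ ≤ provDeg L T A B := step3
end
end

section
/- Let (⊗,→) be either the standard Łukasiewicz operations or the standard product (Goguen) operations on [0,1]. Then for each finite theory Σ and each rational fuzzy attribute implication A ⇒ B, the provability degree |A⇒B|_Σ is a rational number, and moreover Σ ⊢ A ⇒ c⊗B for c = |A⇒B|_Σ (the supremum in the definition of |A⇒B|_Σ is attained). -/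
/- Common framework for Rational Fuzzy Attribute Logic (RFAL):
   truth degrees in the real unit interval, fuzzy sets, subsethood,
   the deductive system (axioms, Cut, Mul), provability and semantic
   entailment degrees, and the least-model iteration. -/

open scoped Classical
noncomputable section

variable {V : Type}

-- Section 1: UI basics
namespace RFAL

lemma UI.le_iff {a b : UI} : a ≤ b ↔ (a:ℝ) ≤ (b:ℝ) := Iff.rfl

lemma UI.lt_iff {a b : UI} : a < b ↔ (a:ℝ) < (b:ℝ) := Iff.rfl

lemma UI.ext_iff' {a b : UI} : a = b ↔ (a:ℝ) = (b:ℝ) := Subtype.ext_iff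

lemma UI.zero_le (a : UI) : (0:UI) ≤ a := a.2.1

lemma UI.le_one (a : UI) : a ≤ (1:UI) := a.2.2

lemma UI.bot_eq_zero : (⊥ : UI) = 0 :=
  le_antisymm (bot_le) (UI.zero_le ⊥)

lemma UI.top_eq_one : (⊤ : UI) = 1 :=
  le_antisymm ((⊤:UI).2.2 : ((⊤:UI):ℝ) ≤ 1) (le_top)

lemma UI.coe_sup (a b : UI) : ((a ⊔ b : UI) : ℝ) = max (a:ℝ) (b:ℝ) := by
  rcases le_total a b with h | h
  · rw [sup_eq_right.2 h, max_eq_right (UI.le_iff.1 h)]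
  · rw [sup_eq_left.2 h, max_eq_left (UI.le_iff.1 h)]

lemma UI.coe_inf (a b : UI) : ((a ⊓ b : UI) : ℝ) = min (a:ℝ) (b:ℝ) := by
  rcases le_total a b with h | h
  · rw [inf_eq_left.2 h, min_eq_left (UI.le_iff.1 h)]
  · rw [inf_eq_right.2 h, min_eq_right (UI.le_iff.1 h)]

lemma UI.coe_iSup {ι : Type*} [Nonempty ι] (f : ι → UI) :
    ((⨆ i, f i : UI) : ℝ) = ⨆ i, (f i : ℝ) :=
  Set.Icc.coe_iSup zero_le_one

lemma UI.lt_one_of_ne {a : UI} (h : a ≠ 1) : a < 1 :=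
  lt_of_le_of_ne (UI.le_one a) h

end RFAL

-- Section 2: abstract consequences of the RStr axioms
namespace RFAL
variable (L : RStr)

lemma adj {a b c : UI} : L.mul a b ≤ c ↔ a ≤ L.imp b c := L.adjoint a b c

lemma one_mul' (a : UI) : L.mul 1 a = a := by rw [L.mul_comm, L.mul_one]

lemma mul_le_iff {a b c : UI} : L.mul a b ≤ c ↔ b ≤ L.imp a c := by
  rw [L.mul_comm]; exact L.adjoint b a c

lemma mul_mono_left {a a' : UI} (b : UI) (h : a ≤ a') : L.mul a b ≤ L.mul a' b :=
  (adj L).2 (le_trans h ((adj L).1 (le_refl (L.mul a' b))))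

lemma mul_mono_right (a : UI) {b b' : UI} (h : b ≤ b') : L.mul a b ≤ L.mul a b' := by
  rw [L.mul_comm a b, L.mul_comm a b']; exact mul_mono_left L a h

lemma imp_mono_right (a : UI) {b b' : UI} (h : b ≤ b') : L.imp a b ≤ L.imp a b' :=
  (adj L).1 (le_trans ((adj L).2 (le_refl (L.imp a b))) h)

lemma imp_anti_left {a a' : UI} (b : UI) (h : a ≤ a') : L.imp a' b ≤ L.imp a b :=
  (adj L).1 (le_trans (mul_mono_right L _ h) ((adj L).2 (le_refl (L.imp a' b))))

lemma imp_eq_one_iff {a b : UI} : L.imp a b = 1 ↔ a ≤ b := by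
  constructor
  · intro h
    have := (adj L).2 (le_of_eq h.symm : (1:UI) ≤ L.imp a b)
    rwa [one_mul' L] at this
  · intro h
    refine le_antisymm (UI.le_one _) ?_
    exact (adj L).1 (by rw [one_mul' L]; exact h)

lemma imp_lt_one_iff {a b : UI} : L.imp a b < 1 ↔ b < a := by
  constructor
  · intro h
    by_contra hc
    exact absurd ((imp_eq_one_iff L).2 (not_lt.1 hc)) (ne_of_lt h)
  · intro h
    refine UI.lt_one_of_ne fun he => ?_
    exact absurd ((imp_eq_one_iff L).1 he) (not_le.2 h)

lemma mul_imp_le {a b : UI} : L.mul (L.imp a b) a ≤ b := (adj L).2 (le_refl _)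

lemma le_imp_mul {a b : UI} : a ≤ L.imp b (L.mul a b) := (adj L).1 (le_refl _)

lemma mul_zero' (a : UI) : L.mul a 0 = 0 := by
  refine le_antisymm ?_ (UI.zero_le _)
  rw [L.mul_comm]
  exact (adj L).2 (UI.zero_le _)

lemma imp_zero_right (a : UI) : L.imp 0 a = 1 := by
  rw [imp_eq_one_iff]; exact UI.zero_le a

lemma imp_exchange (a b c : UI) : L.imp (L.mul a b) c = L.imp a (L.imp b c) := by
  apply le_antisymm
  · rw [← adj, ← adj, L.mul_assoc]
    exact (adj L).2 (le_refl _)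
  · rw [← adj, ← L.mul_assoc, adj]
    exact (adj L).2 (le_refl _)

lemma imp_iInf {ι : Sort*} (c : UI) (f : ι → UI) :
    L.imp c (⨅ i, f i) = ⨅ i, L.imp c (f i) := by
  apply le_antisymm
  · exact le_iInf fun i => imp_mono_right L c (iInf_le f i)
  · rw [← adj]
    refine le_iInf fun i => ?_
    rw [adj]
    exact iInf_le _ i

lemma mul_iSup_left {ι : Type} (b : UI) (f : ι → UI) :
    L.mul (⨆ i, f i) b = ⨆ i, L.mul (f i) b := by
  rw [L.mul_comm, L.mul_iSup]
  exact iSup_congr fun i => L.mul_comm b (f i)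

lemma imp_sup (a b c : UI) : L.imp a (b ⊔ c) = L.imp a b ⊔ L.imp a c :=
  Monotone.map_sup (fun _ _ h => imp_mono_right L a h) b c

end RFAL

-- Section 3: Subdeg lemmas, finite infima, rationality of finite lattice ops
namespace RFAL
variable {V : Type} (L : RStr)

lemma Subdeg_le_imp (X e : V → UI) (q : V) : Subdeg L X e ≤ L.imp (X q) (e q) :=
  iInf_le _ q

lemma le_Subdeg_iff {c : UI} {X e : V → UI} :
    c ≤ Subdeg L X e ↔ ∀ q, L.mul c (X q) ≤ e q := by
  unfold Subdeg
  rw [le_iInf_iff]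
  exact forall_congr' fun q => (adj L).symm

lemma mul_Subdeg_le (X e : V → UI) (q : V) : L.mul (Subdeg L X e) (X q) ≤ e q :=
  (le_Subdeg_iff L).1 (le_refl _) q

lemma Subdeg_mono_right {X e e' : V → UI} (h : ∀ p, e p ≤ e' p) :
    Subdeg L X e ≤ Subdeg L X e' :=
  le_iInf fun q => le_trans (iInf_le _ q) (imp_mono_right L _ (h q))

lemma Subdeg_eq_one_iff {X e : V → UI} : Subdeg L X e = 1 ↔ ∀ p, X p ≤ e p := by
  constructor
  · intro h p
    rw [← imp_eq_one_iff L]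
    exact le_antisymm (UI.le_one _) (h ▸ Subdeg_le_imp L X e p)
  · intro h
    refine le_antisymm (UI.le_one _) (le_iInf fun q => ?_)
    rw [(imp_eq_one_iff L).2 (h q)]

lemma Subdeg_funion (X Y e : V → UI) :
    Subdeg L (funion X Y) e = Subdeg L X e ⊓ Subdeg L Y e := by
  unfold Subdeg funion
  rw [← iInf_inf_eq]
  exact iInf_congr fun q =>
    Antitone.map_sup (f := fun a => L.imp a (e q)) (fun _ _ h => imp_anti_left L _ h) _ _

lemma Subdeg_csmul (c : UI) (X e : V → UI) :
    Subdeg L (csmul L c X) e = L.imp c (Subdeg L X e) := by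
  unfold Subdeg csmul
  rw [imp_iInf]
  exact iInf_congr fun q => imp_exchange L c (X q) (e q)

lemma iInf_eq_finsetInf (f : V → UI) (s : Finset V) (h : ∀ q, q ∉ s → f q = 1) :
    ⨅ q, f q = s.inf f := by
  apply le_antisymm
  · exact Finset.le_inf fun q _ => iInf_le f q
  · refine le_iInf fun q => ?_
    by_cases hq : q ∈ s
    · exact Finset.inf_le hq
    · rw [h q hq]
      exact le_trans le_top (le_of_eq UI.top_eq_one)

lemma Subdeg_eq_finsetInf {X : V → UI} (hX : FinSet X) (e : V → UI) :
    Subdeg L X e = hX.toFinset.inf (fun q => L.imp (X q) (e q)) := by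
  refine iInf_eq_finsetInf _ _ fun q hq => ?_
  have : X q = 0 := by
    by_contra hne
    exact hq (hX.mem_toFinset.2 hne)
  rw [this, imp_zero_right]

lemma isRat_zero : IsRatUI (0 : UI) := ⟨0, by norm_num⟩

lemma isRat_one : IsRatUI (1 : UI) := ⟨1, by norm_num⟩

lemma isRat_inf {a b : UI} (ha : IsRatUI a) (hb : IsRatUI b) : IsRatUI (a ⊓ b) := by
  rcases le_total a b with h | h
  · rwa [inf_eq_left.2 h]
  · rwa [inf_eq_right.2 h]

lemma isRat_sup {a b : UI} (ha : IsRatUI a) (hb : IsRatUI b) : IsRatUI (a ⊔ b) := by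
  rcases le_total a b with h | h
  · rwa [sup_eq_right.2 h]
  · rwa [sup_eq_left.2 h]

lemma isRat_finsetInf {α : Type*} (s : Finset α) (f : α → UI)
    (h : ∀ a ∈ s, IsRatUI (f a)) : IsRatUI (s.inf f) := by
  classical
  induction s using Finset.induction_on with
  | empty => rw [Finset.inf_empty]; exact UI.top_eq_one ▸ isRat_one
  | @insert a s ha ih =>
    rw [Finset.inf_insert]
    exact isRat_inf (h a (Finset.mem_insert_self a s))
      (ih fun b hb => h b (Finset.mem_insert_of_mem hb))

lemma isRat_finsetSup {α : Type*} (s : Finset α) (f : α → UI)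
    (h : ∀ a ∈ s, IsRatUI (f a)) : IsRatUI (s.sup f) := by
  classical
  induction s using Finset.induction_on with
  | empty => rw [Finset.sup_empty]; exact UI.bot_eq_zero ▸ isRat_zero
  | @insert a s ha ih =>
    rw [Finset.sup_insert]
    exact isRat_sup (h a (Finset.mem_insert_self a s))
      (ih fun b hb => h b (Finset.mem_insert_of_mem hb))

end RFAL

-- Section 4: concrete lemmas for the two structures; sup-continuity
namespace RFAL
variable {L : RStr}

section Concrete
variable (h : (L.mul = lukMul ∧ L.imp = lukImp) ∨ (L.mul = prodMul ∧ L.imp = prodImp))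
include h

lemma isRat_mul {a b : UI} (ha : IsRatUI a) (hb : IsRatUI b) : IsRatUI (L.mul a b) := by
  obtain ⟨qa, hqa⟩ := ha; obtain ⟨qb, hqb⟩ := hb
  rcases h with ⟨hm, _⟩ | ⟨hm, _⟩ <;> rw [hm]
  · rcases le_total ((a:ℝ) + b - 1) 0 with h1 | h1
    · refine ⟨0, ?_⟩
      show max 0 ((a:ℝ) + b - 1) = ((0:ℚ):ℝ)
      rw [max_eq_left h1]; norm_num
    · refine ⟨qa + qb - 1, ?_⟩
      show max 0 ((a:ℝ) + b - 1) = ((qa + qb - 1 : ℚ):ℝ)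
      rw [max_eq_right h1, hqa, hqb]; push_cast; ring
  · refine ⟨qa * qb, ?_⟩
    show (a:ℝ) * b = ((qa * qb : ℚ):ℝ)
    rw [hqa, hqb]; push_cast; ring

lemma isRat_imp {a b : UI} (ha : IsRatUI a) (hb : IsRatUI b) : IsRatUI (L.imp a b) := by
  obtain ⟨qa, hqa⟩ := ha; obtain ⟨qb, hqb⟩ := hb
  rcases h with ⟨_, hi⟩ | ⟨_, hi⟩ <;> rw [hi]
  · rcases le_total (1 - (a:ℝ) + b) 1 with h1 | h1
    · refine ⟨1 - qa + qb, ?_⟩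
      show min 1 (1 - (a:ℝ) + b) = ((1 - qa + qb : ℚ):ℝ)
      rw [min_eq_right h1, hqa, hqb]; push_cast; ring
    · refine ⟨1, ?_⟩
      show min 1 (1 - (a:ℝ) + b) = ((1:ℚ):ℝ)
      rw [min_eq_left h1]; norm_num
  · by_cases hab : a ≤ b
    · refine ⟨1, ?_⟩
      rw [prodImp, dif_pos hab]; norm_num
    · refine ⟨qb / qa, ?_⟩
      rw [prodImp, dif_neg hab]
      show (b:ℝ) / a = ((qb / qa : ℚ):ℝ)
      rw [hqa, hqb]; push_cast; ring

lemma keyA {a x b : UI} (h1 : L.imp a x ≤ b) (h2 : b < 1) : x ≤ L.mul a b := by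
  rcases h with ⟨hm, hi⟩ | ⟨hm, hi⟩ <;> rw [hm] <;> rw [hi] at h1
  · rw [UI.le_iff] at h1 ⊢
    have hb1 : (b:ℝ) < 1 := h2
    have hmin : min 1 (1 - (a:ℝ) + x) ≤ b := h1
    have hx : 1 - (a:ℝ) + x ≤ b := by
      rcases min_le_iff.1 hmin with h' | h'
      · linarith
      · exact h'
    show (x:ℝ) ≤ max 0 ((a:ℝ) + b - 1)
    exact le_trans (by linarith) (le_max_right _ _)
  · rw [UI.le_iff] at h1 ⊢
    have hb1 : (b:ℝ) < 1 := h2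
    by_cases hax : a ≤ x
    · exfalso
      rw [prodImp, dif_pos hax] at h1
      exact absurd (h1 : (1:ℝ) ≤ b) (not_le.2 hb1)
    · rw [prodImp, dif_neg hax] at h1
      have hxa : (x:ℝ) < a := not_le.1 (fun hc => hax (UI.le_iff.2 hc))
      have ha0 : (0:ℝ) < a := lt_of_le_of_lt x.2.1 hxa
      have hdiv : (x:ℝ) / a ≤ b := h1
      show (x:ℝ) ≤ (a:ℝ) * b
      calc (x:ℝ) = x / a * a := by field_simp
      _ ≤ b * a := mul_le_mul_of_nonneg_right hdiv (le_of_lt ha0)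
      _ = a * b := mul_comm _ _

lemma keyB (a b : UI) : L.imp a (L.mul a b) ≤ b ⊔ L.imp a 0 := by
  rcases h with ⟨hm, hi⟩ | ⟨hm, hi⟩ <;> rw [hm, hi] <;> rw [UI.le_iff, UI.coe_sup]
  · show min 1 (1 - (a:ℝ) + max 0 ((a:ℝ) + b - 1)) ≤
      max (b:ℝ) (min 1 (1 - (a:ℝ) + ((0:UI):ℝ)))
    have h00 : ((0:UI):ℝ) = 0 := rfl
    rcases le_total ((a:ℝ) + b - 1) 0 with h1 | h1
    · rw [max_eq_left h1, h00]
      exact le_max_of_le_right (le_refl _)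
    · rw [max_eq_right h1]
      refine le_max_of_le_left ?_
      have he : 1 - (a:ℝ) + (a + b - 1) = b := by ring
      rw [he]
      exact min_le_right _ _
  · show ((prodImp a (prodMul a b)):ℝ) ≤ max (b:ℝ) ((prodImp a 0):ℝ)
    by_cases ha : (a:ℝ) = 0
    · have h0 : a ≤ (0:UI) := UI.le_iff.2 (le_of_eq ha)
      rw [prodImp, dif_pos (le_trans h0 (UI.zero_le _))]
      refine le_max_of_le_right ?_
      rw [prodImp, dif_pos h0]
    · have ha0 : (0:ℝ) < a := lt_of_le_of_ne a.2.1 (Ne.symm ha)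
      by_cases hab : a ≤ prodMul a b
      · have h2 : (a:ℝ) ≤ a * b := hab
        have hb1 : (1:ℝ) ≤ b := by
          by_contra hc
          nlinarith [b.2.2]
        have hbe : (b:ℝ) = 1 := le_antisymm b.2.2 hb1
        rw [prodImp, dif_pos hab]
        exact le_max_of_le_left (le_of_eq hbe.symm)
      · rw [prodImp, dif_neg hab]
        refine le_max_of_le_left ?_
        show ((prodMul a b):ℝ) / a ≤ b
        show (a:ℝ) * b / a ≤ b
        rw [mul_comm, mul_div_assoc, div_self ha, mul_one]

lemma imp_iSup (a : UI) (f : ℕ → UI) : L.imp a (⨆ n, f n) = ⨆ n, L.imp a (f n) := by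
  apply le_antisymm
  · set b := ⨆ n, L.imp a (f n) with hb
    rcases eq_or_lt_of_le (UI.le_one b) with hb1 | hb1
    · rw [hb1]; exact UI.le_one _
    · have h1 : ∀ n, f n ≤ L.mul a b :=
        fun n => keyA h (le_iSup (fun n => L.imp a (f n)) n) hb1
      have h2 : (⨆ n, f n) ≤ L.mul a b := iSup_le h1
      refine le_trans (imp_mono_right L a h2) (le_trans (keyB h a b) ?_)
      have : L.imp a 0 ≤ b :=
        le_trans (imp_mono_right L a (UI.zero_le (f 0))) (le_iSup (fun n => L.imp a (f n)) 0)
      exact sup_le (le_refl b) this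
  · exact iSup_le fun n => imp_mono_right L a (le_iSup f n)

end Concrete

lemma sup_inf_mono (u v : ℕ → UI) (hu : Monotone u) (hv : Monotone v) :
    (⨆ n, u n) ⊓ (⨆ n, v n) = ⨆ n, u n ⊓ v n := by
  apply le_antisymm
  · refine le_of_forall_lt fun c hc => ?_
    rw [lt_inf_iff] at hc
    obtain ⟨n, hn⟩ := lt_iSup_iff.1 hc.1
    obtain ⟨m, hm⟩ := lt_iSup_iff.1 hc.2
    refine lt_of_lt_of_le ?_ (le_iSup (fun k => u k ⊓ v k) (n ⊔ m))
    rw [lt_inf_iff]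
    exact ⟨lt_of_lt_of_le hn (hu le_sup_left), lt_of_lt_of_le hm (hv le_sup_right)⟩
  · exact iSup_le fun n => inf_le_inf (le_iSup u n) (le_iSup v n)

lemma finsetInf_iSup_mono {α : Type*} (s : Finset α) (f : α → ℕ → UI)
    (hf : ∀ a, Monotone (f a)) :
    s.inf (fun a => ⨆ n, f a n) = ⨆ n, s.inf (fun a => f a n) := by
  classical
  induction s using Finset.induction_on with
  | empty => simp [Finset.inf_empty]
  | @insert a s ha ih =>
    rw [Finset.inf_insert, ih]
    rw [sup_inf_mono _ _ (hf a) (fun n m hnm => Finset.le_inf fun b hb =>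
      le_trans (Finset.inf_le hb) (hf b hnm))]
    exact iSup_congr fun n => by rw [Finset.inf_insert]

lemma Subdeg_iSup {V : Type} {X : V → UI} (hX : FinSet X)
    (h : (L.mul = lukMul ∧ L.imp = lukImp) ∨ (L.mul = prodMul ∧ L.imp = prodImp))
    (e : ℕ → V → UI) (he : ∀ q, Monotone (fun n => e n q)) :
    (⨆ n, Subdeg L X (e n)) = Subdeg L X (fun q => ⨆ n, e n q) := by
  rw [Subdeg_eq_finsetInf L hX]
  have : ∀ q, L.imp (X q) (⨆ n, e n q) = ⨆ n, L.imp (X q) (e n q) :=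
    fun q => imp_iSup h (X q) (fun n => e n q)
  rw [Finset.inf_congr rfl (fun q _ => this q)]
  rw [finsetInf_iSup_mono _ _ (fun q n m hnm => imp_mono_right L (X q) (he q hnm))]
  exact iSup_congr fun n => Subdeg_eq_finsetInf L hX (e n)

end RFAL

-- Section 5: more concrete lemmas
namespace RFAL
variable {L : RStr}
  (h : (L.mul = lukMul ∧ L.imp = lukImp) ∨ (L.mul = prodMul ∧ L.imp = prodImp))
include h

lemma div_le {x y : UI} (hxy : x ≤ y) : x ≤ L.mul (L.imp y x) y := by
  rcases h with ⟨hm, hi⟩ | ⟨hm, hi⟩ <;> rw [hm, hi] <;> rw [UI.le_iff] at hxy ⊢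
  · show (x:ℝ) ≤ max 0 (min 1 (1 - (y:ℝ) + x) + y - 1)
    have h1 : min 1 (1 - (y:ℝ) + x) = 1 - (y:ℝ) + x :=
      min_eq_right (by have := x.2.1; linarith)
    rw [h1]
    exact le_trans (le_of_eq (by ring)) (le_max_right _ _)
  · by_cases hyx : y ≤ x
    · rw [prodImp, dif_pos hyx]
      show (x:ℝ) ≤ 1 * y
      rw [one_mul]; exact hxy
    · rw [prodImp, dif_neg hyx]
      show (x:ℝ) ≤ (x:ℝ) / y * y
      have hy0 : (0:ℝ) < y := by
        have : (x:ℝ) < y := not_le.1 fun hc => hyx (UI.le_iff.2 hc)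
        exact lt_of_le_of_lt x.2.1 this
      rw [div_mul_cancel₀ _ (ne_of_gt hy0)]

lemma mul_lt_of_lt_one {Z p : UI} (hZ : Z < 1) (hp : 0 < p) : L.mul Z p < p := by
  rcases h with ⟨hm, _⟩ | ⟨hm, _⟩ <;> rw [hm] <;> rw [UI.lt_iff] at hZ hp ⊢
  · show max 0 ((Z:ℝ) + p - 1) < p
    have h1 : ((1:UI):ℝ) = 1 := rfl
    have h0 : ((0:UI):ℝ) = 0 := rfl
    rw [h1] at hZ; rw [h0] at hp
    rw [max_lt_iff]
    constructor
    · exact hp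
    · have := p.2.2; linarith
  · show (Z:ℝ) * p < p
    have h1 : ((1:UI):ℝ) = 1 := rfl
    have h0 : ((0:UI):ℝ) = 0 := rfl
    rw [h1] at hZ; rw [h0] at hp
    nlinarith

lemma coreIneq {a l x s B Lp vn : UI} (hs : s = L.imp a l) (hLp : Lp = L.mul s B)
    (hvn : vn = L.mul (L.imp a x) B) (hla : l ≤ a) (hxl : x < l) (hLp0 : 0 < Lp) :
    L.imp Lp vn ≤ L.imp l x ⊔ L.imp Lp 0 := by
  have hl0 : (0:ℝ) < l := lt_of_le_of_lt x.2.1 hxl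
  have ha0 : (0:ℝ) < a := lt_of_lt_of_le hl0 hla
  have hxa : (x:ℝ) < a := lt_of_lt_of_le hxl hla
  rcases h with ⟨hm, hi⟩ | ⟨hm, hi⟩ <;> simp only [hm, hi] at hs hLp hvn ⊢ <;>
    rw [UI.le_iff, UI.coe_sup]
  · -- Łukasiewicz
    have hsv : (s:ℝ) = 1 - a + l := by
      rw [hs]; exact min_eq_right (by have := UI.le_iff.1 hla; linarith)
    have hLpv : (Lp:ℝ) = l - a + B := by
      rw [hLp]
      show max 0 ((s:ℝ) + B - 1) = (l:ℝ) - a + B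
      have hpos : (0:ℝ) < max 0 ((s:ℝ) + B - 1) := by
        have := UI.lt_iff.1 hLp0
        rwa [hLp] at this
      rw [max_eq_right (by rcases le_or_gt ((s:ℝ) + B - 1) 0 with hc | hc
                           · rw [max_eq_left hc] at hpos; linarith
                           · linarith)]
      rw [hsv]; ring
    have hix : ((lukImp a x : UI):ℝ) = 1 - a + x :=
      min_eq_right (by have := x.2.1; linarith)
    have hvnv : (vn:ℝ) = max 0 ((x:ℝ) - a + B) := by
      rw [hvn]
      show max 0 (((lukImp a x):ℝ) + B - 1) = _
      rw [hix]; ring_nf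
    rcases le_or_gt ((x:ℝ) - a + B) 0 with hc | hc
    · -- vn = 0
      refine le_max_of_le_right ?_
      show min 1 (1 - (Lp:ℝ) + vn) ≤ min 1 (1 - (Lp:ℝ) + ((0:UI):ℝ))
      have h00 : ((0:UI):ℝ) = 0 := rfl
      rw [hvnv, max_eq_left hc, h00]
    · refine le_max_of_le_left ?_
      show min 1 (1 - (Lp:ℝ) + vn) ≤ min 1 (1 - (l:ℝ) + x)
      rw [hvnv, max_eq_right (le_of_lt hc), hLpv]
      exact le_of_eq (by ring_nf)
  · -- product
    have hsv : (s:ℝ) = l / a := by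
      rw [hs]
      by_cases hal : a ≤ l
      · have : (a:ℝ) = l := le_antisymm hal (UI.le_iff.1 hla)
        rw [prodImp, dif_pos hal]
        show (1:ℝ) = _
        rw [← this, div_self (ne_of_gt ha0)]
      · rw [prodImp, dif_neg hal]
    have hB0 : (0:ℝ) < B := by
      have := UI.lt_iff.1 hLp0
      rw [hLp] at this
      show (0:ℝ) < B
      by_contra hc
      have hb0 : (B:ℝ) = 0 := le_antisymm (not_lt.1 hc) B.2.1
      have : (0:ℝ) < (s:ℝ) * B := this
      rw [hb0, mul_zero] at this
      exact lt_irrefl 0 this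
    have hLpv : (Lp:ℝ) = l / a * B := by rw [hLp]; show (s:ℝ) * B = _; rw [hsv]
    have hixv : ((prodImp a x : UI):ℝ) = x / a := by
      rw [prodImp, dif_neg (fun hc => not_le.2 hxa (UI.le_iff.1 hc))]
    have hvnv : (vn:ℝ) = x / a * B := by rw [hvn]; show ((prodImp a x):ℝ) * B = _; rw [hixv]
    have hvLp : vn < Lp := by
      rw [UI.lt_iff, hvnv, hLpv]
      rw [div_mul_eq_mul_div, div_mul_eq_mul_div]
      rw [div_lt_div_iff_of_pos_right ha0]
      have := UI.lt_iff.1 hxl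
      nlinarith
    refine le_max_of_le_left ?_
    show ((prodImp Lp vn):ℝ) ≤ ((prodImp l x):ℝ)
    rw [prodImp, dif_neg (not_le.2 hvLp), prodImp, dif_neg (not_le.2 hxl)]
    show (vn:ℝ) / Lp ≤ (x:ℝ) / l
    rw [hvnv, hLpv]
    rw [show (x:ℝ)/a*B / ((l:ℝ)/a*B) = (x:ℝ)/l from by
      field_simp]

end RFAL

-- Section 6: the iteration E n = iter L T A n
namespace RFAL
variable {V : Type} (L : RStr) (T : Set ((V → UI) × (V → UI)))

lemma biSup_eq_finsetSup (hfin : T.Finite) (f : ((V → UI) × (V → UI)) → UI) :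
    (⨆ AB ∈ T, f AB) = hfin.toFinset.sup f := by
  rw [Finset.sup_eq_iSup]
  exact iSup_congr fun AB => by rw [Set.Finite.mem_toFinset]

lemma iter_succ (hfin : T.Finite) (A : V → UI) (n : ℕ) (p : V) :
    iter L T A (n+1) p = iter L T A n p ⊔
      hfin.toFinset.sup (fun AB => L.mul (Subdeg L AB.1 (iter L T A n)) (AB.2 p)) := by
  show iter L T A n p ⊔ (⨆ AB ∈ T, L.mul (Subdeg L AB.1 (iter L T A n)) (AB.2 p)) = _
  rw [biSup_eq_finsetSup T hfin]

lemma iter_le_succ (A : V → UI) (n : ℕ) (p : V) : iter L T A n p ≤ iter L T A (n+1) p :=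
  le_sup_left

lemma iter_mono (A : V → UI) (p : V) : Monotone (fun n => iter L T A n p) :=
  monotone_nat_of_le_succ fun n => iter_le_succ L T A n p

lemma term_le_iter_succ (A : V → UI) {AB} (hAB : AB ∈ T) (n : ℕ) (p : V) :
    L.mul (Subdeg L AB.1 (iter L T A n)) (AB.2 p) ≤ iter L T A (n+1) p := by
  refine le_trans ?_ (le_sup_right :
    (⨆ AB ∈ T, L.mul (Subdeg L AB.1 (iter L T A n)) (AB.2 p)) ≤ iter L T A (n+1) p)
  exact le_iSup₂ (f := fun AB (_ : AB ∈ T) => L.mul (Subdeg L AB.1 (iter L T A n)) (AB.2 p))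
    AB hAB

lemma iter_le_omega (A : V → UI) (n : ℕ) (p : V) : iter L T A n p ≤ omegaIter L T A p :=
  le_iSup (fun n => iter L T A n p) n

variable {T}

lemma iter_zero_outside (hfin : T.Finite) (A : V → UI) {p : V}
    (hp : ∀ AB ∈ T, AB.2 p = 0) (n : ℕ) : iter L T A n p = A p := by
  induction n with
  | zero => rfl
  | succ n ih =>
    rw [iter_succ L T hfin A n p, ih]
    have : ∀ AB ∈ hfin.toFinset, L.mul (Subdeg L AB.1 (iter L T A n)) (AB.2 p) ≤ 0 := by
      intro AB hAB
      rw [hp AB (hfin.mem_toFinset.1 hAB), mul_zero']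
    refine sup_eq_left.2 (le_trans (Finset.sup_le this) (UI.zero_le _))

lemma iter_finSet (hfin : T.Finite) (hT : IsTheory T) {A : V → UI} (hAf : FinSet A)
    (n : ℕ) : FinSet (iter L T A n) := by
  have hsub : {p | iter L T A n p ≠ 0} ⊆
      {p | A p ≠ 0} ∪ ⋃ AB ∈ T, {p | AB.2 p ≠ 0} := by
    intro p hp
    by_contra hc
    simp only [Set.mem_union, Set.mem_setOf_eq, Set.mem_iUnion, not_or, not_exists,
      not_not] at hc
    exact hp (by rw [iter_zero_outside L hfin A (fun AB hAB => hc.2 AB hAB) n, hc.1])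
  exact Set.Finite.subset (Set.Finite.union hAf
    (Set.Finite.biUnion hfin fun AB hAB => (hT AB hAB).2.2.1)) hsub

lemma iter_ratSet
    (h : (L.mul = lukMul ∧ L.imp = lukImp) ∨ (L.mul = prodMul ∧ L.imp = prodImp))
    (hfin : T.Finite) (hT : IsTheory T) {A : V → UI} (hAr : RatSet A)
    (n : ℕ) : RatSet (iter L T A n) := by
  induction n with
  | zero => exact hAr
  | succ n ih =>
    intro p
    rw [iter_succ L T hfin A n p]
    refine isRat_sup (ih p) (isRat_finsetSup _ _ fun AB hAB => ?_)
    have hAB' := hfin.mem_toFinset.1 hAB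
    refine isRat_mul h ?_ ((hT AB hAB').2.2.2 p)
    rw [Subdeg_eq_finsetInf L (hT AB hAB').1]
    exact isRat_finsetInf _ _ fun q _ => isRat_imp h ((hT AB hAB').2.1 q) (ih q)

lemma subdeg_iter_rat
    (h : (L.mul = lukMul ∧ L.imp = lukImp) ∨ (L.mul = prodMul ∧ L.imp = prodImp))
    (hfin : T.Finite) (hT : IsTheory T) {A : V → UI} (hAr : RatSet A)
    {X : V → UI} (hXf : FinSet X) (hXr : RatSet X) (n : ℕ) :
    IsRatUI (Subdeg L X (iter L T A n)) := by
  rw [Subdeg_eq_finsetInf L hXf]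
  exact isRat_finsetInf _ _ fun q _ =>
    isRat_imp h (hXr q) (iter_ratSet L h hfin hT hAr n q)

lemma vInf_le_omega
    (h : (L.mul = lukMul ∧ L.imp = lukImp) ∨ (L.mul = prodMul ∧ L.imp = prodImp))
    (hfin : T.Finite) (hT : IsTheory T) (A : V → UI) {AB} (hAB : AB ∈ T) (p : V) :
    L.mul (Subdeg L AB.1 (omegaIter L T A)) (AB.2 p) ≤ omegaIter L T A p := by
  have hc : Subdeg L AB.1 (omegaIter L T A) = ⨆ n, Subdeg L AB.1 (iter L T A n) := by
    rw [Subdeg_iSup (hT AB hAB).1 h _ (fun q => iter_mono L T A q)]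
    rfl
  rw [hc, L.mul_comm, L.mul_iSup]
  refine iSup_le fun n => ?_
  rw [L.mul_comm]
  exact le_trans (term_le_iter_succ L T A hAB n p) (iter_le_omega L T A (n+1) p)

end RFAL

-- Section 7: derived inference rules and provability of the iteration
namespace RFAL
variable {V : Type} (L : RStr)

def zeroF : V → UI := fun _ => 0

lemma funion_zero (X : V → UI) : funion X zeroF = X :=
  funext fun p => sup_eq_left.2 (UI.zero_le (X p))

lemma funion_self (X : V → UI) : funion X X = X := funext fun p => sup_idem _

lemma funion_eq_left {X Y : V → UI} (h : ∀ p, Y p ≤ X p) : funion X Y = X :=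
  funext fun p => sup_eq_left.2 (h p)

lemma finSet_zero : FinSet (zeroF : V → UI) := by
  have : {p : V | zeroF p ≠ 0} = ∅ := by
    ext p; simp [zeroF]
  rw [FinSet, this]; exact Set.finite_empty

lemma ratSet_zero : RatSet (zeroF : V → UI) := fun _ => isRat_zero

lemma finSet_funion {X Y : V → UI} (hX : FinSet X) (hY : FinSet Y) :
    FinSet (funion X Y) := by
  refine Set.Finite.subset (hX.union hY) fun p hp => ?_
  simp only [Set.mem_setOf_eq, funion] at hp
  by_contra hc
  simp only [Set.mem_union, Set.mem_setOf_eq, not_or, not_not] at hc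
  exact hp (by rw [hc.1, hc.2, sup_idem])

lemma ratSet_funion {X Y : V → UI} (hX : RatSet X) (hY : RatSet Y) :
    RatSet (funion X Y) := fun p => isRat_sup (hX p) (hY p)

lemma finSet_csmul (c : UI) {X : V → UI} (hX : FinSet X) : FinSet (csmul L c X) := by
  refine Set.Finite.subset hX fun p hp => ?_
  simp only [Set.mem_setOf_eq, csmul] at hp ⊢
  intro hc
  exact hp (by rw [hc, mul_zero'])

lemma ratSet_csmul
    (h : (L.mul = lukMul ∧ L.imp = lukImp) ∨ (L.mul = prodMul ∧ L.imp = prodImp))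
    {c : UI} (hc : IsRatUI c) {X : V → UI} (hX : RatSet X) : RatSet (csmul L c X) :=
  fun p => isRat_mul h hc (hX p)

variable (T : Set ((V → UI) × (V → UI)))

lemma prv_subset {X Y : V → UI} (hle : ∀ p, Y p ≤ X p)
    (hXf : FinSet X) (hXr : RatSet X) (hYf : FinSet Y) (hYr : RatSet Y) :
    Proves L T X Y := by
  have hax := Proves.ax (L := L) (T := T) X Y hXf hXr hYf hYr
  rwa [funion_eq_left hle] at hax

lemma prv_trans {X Y Z : V → UI} (hXY : Proves L T X Y) (hYZ : Proves L T Y Z) :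
    Proves L T X Z := by
  have h2 : Proves L T (funion Y zeroF) Z := by rwa [funion_zero]
  have := Proves.cut X Y zeroF Z hXY h2
  rwa [funion_zero] at this

lemma prv_union {X Y Z : V → UI} (hXY : Proves L T X Y) (hXZ : Proves L T X Z)
    (hXf : FinSet X) (hXr : RatSet X) (hYf : FinSet Y) (hYr : RatSet Y)
    (hZf : FinSet Z) (hZr : RatSet Z) :
    Proves L T X (funion Y Z) := by
  have s1 : Proves L T X (funion X Y) := by
    have h2 : Proves L T (funion Y X) (funion X Y) :=
      prv_subset L T (fun p => le_of_eq (sup_comm _ _))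
        (finSet_funion hYf hXf) (ratSet_funion hYr hXr)
        (finSet_funion hXf hYf) (ratSet_funion hXr hYr)
    have := Proves.cut X Y X (funion X Y) hXY h2
    rwa [funion_self] at this
  have s2 : Proves L T (funion X Y) (funion Y Z) := by
    have h3 : Proves L T (funion Z Y) (funion Y Z) :=
      prv_subset L T (fun p => le_of_eq (sup_comm _ _))
        (finSet_funion hZf hYf) (ratSet_funion hZr hYr)
        (finSet_funion hYf hZf) (ratSet_funion hYr hZr)
    exact Proves.cut X Z Y (funion Y Z) hXZ h3
  exact prv_trans L T s1 s2

variable {T}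
variable (h : (L.mul = lukMul ∧ L.imp = lukImp) ∨ (L.mul = prodMul ∧ L.imp = prodImp))
  (hfin : T.Finite) (hT : IsTheory T) {A : V → UI}
  (hAf : FinSet A) (hAr : RatSet A)
include h hfin hT hAf hAr

lemma prv_iter (n : ℕ) : Proves L T A (iter L T A n) := by
  induction n with
  | zero => exact prv_subset L T (fun p => le_refl _) hAf hAr hAf hAr
  | succ n ih =>
    set E := iter L T A n with hE
    have hEf : FinSet E := iter_finSet L hfin hT hAf n
    have hEr : RatSet E := iter_ratSet L h hfin hT hAr n
    have key : ∀ s : Finset ((V → UI) × (V → UI)), ↑s ⊆ T →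
        Proves L T A (funion E
          (fun p => s.sup (fun AB => L.mul (Subdeg L AB.1 E) (AB.2 p)))) ∧
        FinSet (fun p => s.sup (fun AB => L.mul (Subdeg L AB.1 E) (AB.2 p))) ∧
        RatSet (fun p => s.sup (fun AB => L.mul (Subdeg L AB.1 E) (AB.2 p))) := by
      intro s
      classical
      induction s using Finset.induction_on with
      | empty =>
        intro _
        have hz : (fun p => (∅ : Finset ((V → UI) × (V → UI))).sup
            (fun AB => L.mul (Subdeg L AB.1 E) (AB.2 p))) = (zeroF : V → UI) := by
          funext p
          simp [Finset.sup_empty, UI.bot_eq_zero, zeroF]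
        rw [hz, funion_zero]
        exact ⟨ih, finSet_zero, ratSet_zero⟩
      | @insert AB s hAB ihs =>
        intro hsub
        have hABT : AB ∈ T := hsub (Finset.mem_insert_self AB s)
        have hsub' : ↑s ⊆ T := fun x hx => hsub (Finset.mem_insert_of_mem hx)
        obtain ⟨ihp, ihf, ihr⟩ := ihs hsub'
        set c := Subdeg L AB.1 E with hc
        have hcr : IsRatUI c :=
          subdeg_iter_rat L h hfin hT hAr (hT AB hABT).1 (hT AB hABT).2.1 n
        have d1 : Proves L T AB.1 AB.2 := Proves.hyp AB.1 AB.2 hABT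
        have d2 : Proves L T (csmul L c AB.1) (csmul L c AB.2) :=
          Proves.mul AB.1 AB.2 c hcr d1
        have d3 : Proves L T E (csmul L c AB.1) := by
          refine prv_subset L T (fun p => ?_) hEf hEr
            (finSet_csmul L c (hT AB hABT).1) (ratSet_csmul L h hcr (hT AB hABT).2.1)
          exact mul_Subdeg_le L AB.1 E p
        have d5 : Proves L T A (csmul L c AB.2) :=
          prv_trans L T ih (prv_trans L T d3 d2)
        have hcf : FinSet (csmul L c AB.2) := finSet_csmul L c (hT AB hABT).2.2.1
        have hcr2 : RatSet (csmul L c AB.2) := ratSet_csmul L h hcr (hT AB hABT).2.2.2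
        have hu := prv_union L T ihp d5 hAf hAr
          (finSet_funion hEf ihf) (ratSet_funion hEr ihr) hcf hcr2
        have heq : funion (funion E
            (fun p => s.sup (fun AB => L.mul (Subdeg L AB.1 E) (AB.2 p))))
            (csmul L c AB.2) =
            funion E (fun p => (insert AB s).sup
              (fun AB => L.mul (Subdeg L AB.1 E) (AB.2 p))) := by
          funext p
          simp only [funion, csmul, hc, Finset.sup_insert]
          rw [sup_assoc]
          congr 1
          exact sup_comm _ _
        rw [heq] at hu
        refine ⟨hu, ?_, ?_⟩
        · have : (fun p => (insert AB s).sup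
              (fun AB => L.mul (Subdeg L AB.1 E) (AB.2 p))) =
              funion (csmul L c AB.2)
                (fun p => s.sup (fun AB => L.mul (Subdeg L AB.1 E) (AB.2 p))) := by
            funext p
            simp only [funion, csmul, hc, Finset.sup_insert]
          rw [this]
          exact finSet_funion hcf ihf
        · intro p
          simp only [Finset.sup_insert]
          exact isRat_sup (hcr2 p) (ihr p)
    obtain ⟨hp, _, _⟩ := key hfin.toFinset (by simp [Set.Finite.coe_toFinset])
    have : funion E (fun p => hfin.toFinset.sup
        (fun AB => L.mul (Subdeg L AB.1 E) (AB.2 p))) = iter L T A (n+1) := by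
      funext p
      rw [iter_succ L T hfin A n p]
      rfl
    rwa [this] at hp

lemma prv_of_le_iter {D : V → UI} (hDf : FinSet D) (hDr : RatSet D) (n : ℕ)
    (hle : ∀ p, D p ≤ iter L T A n p) : Proves L T A D := by
  refine prv_trans L T (prv_iter L h hfin hT hAf hAr n) ?_
  exact prv_subset L T hle (iter_finSet L hfin hT hAf n)
    (iter_ratSet L h hfin hT hAr n) hDf hDr

end RFAL

-- Section 8: soundness and small helpers
namespace RFAL
variable {V : Type} (L : RStr) (T : Set ((V → UI) × (V → UI)))

lemma sound {C D : V → UI} (hCD : Proves L T C D) (e : V → UI)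
    (he : ∀ AB ∈ T, Subdeg L AB.1 e ≤ Subdeg L AB.2 e) :
    Subdeg L C e ≤ Subdeg L D e := by
  induction hCD with
  | ax X Y _ _ _ _ => rw [Subdeg_funion]; exact inf_le_right
  | hyp X Y hmem => exact he (X, Y) hmem
  | cut X Y Z W _ _ ih1 ih2 =>
    rw [Subdeg_funion]
    rw [Subdeg_funion] at ih2
    exact le_trans (inf_le_inf_right _ ih1) ih2
  | mul X Y c _ _ ih =>
    rw [Subdeg_csmul, Subdeg_csmul]
    exact imp_mono_right L c ih

lemma eventually_finset {α : Type*} (s : Finset α) (P : α → ℕ → Prop)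
    (hmono : ∀ a ∈ s, ∀ n m, n ≤ m → P a n → P a m) (hex : ∀ a ∈ s, ∃ n, P a n) :
    ∃ N, ∀ n, N ≤ n → ∀ a ∈ s, P a n := by
  classical
  induction s using Finset.induction_on with
  | empty => exact ⟨0, fun n _ a ha => absurd ha (Finset.notMem_empty a)⟩
  | @insert a s ha ih =>
    obtain ⟨N, hN⟩ := ih (fun b hb => hmono b (Finset.mem_insert_of_mem hb))
      (fun b hb => hex b (Finset.mem_insert_of_mem hb))
    obtain ⟨na, hna⟩ := hex a (Finset.mem_insert_self a s)
    refine ⟨N ⊔ na, fun n hn b hb => ?_⟩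
    rcases Finset.mem_insert.1 hb with rfl | hb'
    · exact hmono b (Finset.mem_insert_self b s) na n (le_trans le_sup_right hn) hna
    · exact hN n (le_trans le_sup_left hn) b hb'

lemma imp_finsetSup_le {α : Type*} (a c : UI) (s : Finset α) (g : α → UI)
    (h0 : L.imp a 0 ≤ c) (hg : ∀ b ∈ s, L.imp a (g b) ≤ c) :
    L.imp a (s.sup g) ≤ c := by
  classical
  induction s using Finset.induction_on with
  | empty =>
    rw [Finset.sup_empty, UI.bot_eq_zero]
    exact h0
  | @insert b s hb ih =>
    rw [Finset.sup_insert, imp_sup]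
    exact sup_le (hg b (Finset.mem_insert_self b s))
      (ih fun b' hb' => hg b' (Finset.mem_insert_of_mem hb'))

end RFAL

-- Section 9: the iteration stabilizes after finitely many steps
namespace RFAL
variable {V : Type} (L : RStr) {T : Set ((V → UI) × (V → UI))}

lemma iter_stabilizes
    (h : (L.mul = lukMul ∧ L.imp = lukImp) ∨ (L.mul = prodMul ∧ L.imp = prodImp))
    (hfin : T.Finite) (hT : IsTheory T) (A : V → UI) :
    ∃ N, iter L T A (N+1) = iter L T A N := by
  classical
  have hmono : ∀ p, Monotone fun n => iter L T A n p := fun p => iter_mono L T A p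
  have hELf : ∀ n p, iter L T A n p ≤ omegaIter L T A p := fun n p => iter_le_omega L T A n p
  have hS2fin : (⋃ AB ∈ T, {p | AB.2 p ≠ 0}).Finite :=
    Set.Finite.biUnion hfin fun AB hAB => (hT AB hAB).2.2.1
  have hconst : ∀ p, p ∉ (⋃ AB ∈ T, {p | AB.2 p ≠ 0}) → ∀ n, iter L T A n p = A p := by
    intro p hp n
    refine iter_zero_outside L hfin A (fun AB hAB => ?_) n
    by_contra hc
    exact hp (Set.mem_biUnion hAB hc)
  have hout : ∀ p, p ∉ (⋃ AB ∈ T, {p | AB.2 p ≠ 0}) → ∀ n,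
      iter L T A n p = omegaIter L T A p := by
    intro p hp n
    rw [hconst p hp n]
    refine le_antisymm ?_ (iSup_le fun m => le_of_eq (hconst p hp m))
    exact le_trans (le_of_eq (hconst p hp 0).symm) (le_iSup (fun m => iter L T A m p) 0)
  have hAttAll : ∀ p, ∃ n, iter L T A n p = omegaIter L T A p := by
    by_contra hc
    push_neg at hc
    obtain ⟨p₀, hp₀⟩ := hc
    have hUlt : ∀ p, (∀ n, iter L T A n p ≠ omegaIter L T A p) →
        ∀ n, iter L T A n p < omegaIter L T A p := fun p hp n =>
      lt_of_le_of_ne (hELf n p) (hp n)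
    have hU0 : ∀ p, (∀ n, iter L T A n p ≠ omegaIter L T A p) → 0 < omegaIter L T A p :=
      fun p hp => lt_of_le_of_lt (UI.zero_le (iter L T A 0 p)) (hUlt p hp 0)
    have hUS2 : ∀ p, (∀ n, iter L T A n p ≠ omegaIter L T A p) →
        p ∈ (⋃ AB ∈ T, {p | AB.2 p ≠ 0}) := by
      intro p hp
      by_contra hps
      exact hp 0 (hout p hps 0)
    set UF := hS2fin.toFinset.filter
      (fun p => ∀ n, iter L T A n p ≠ omegaIter L T A p) with hUF
    have hUFmem : ∀ p, (∀ n, iter L T A n p ≠ omegaIter L T A p) → p ∈ UF := fun p hp =>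
      Finset.mem_filter.2 ⟨hS2fin.mem_toFinset.2 (hUS2 p hp), hp⟩
    have hsdeg_le : ∀ (AB : (V → UI) × (V → UI)) (n : ℕ),
        Subdeg L AB.1 (iter L T A n) ≤ Subdeg L AB.1 (omegaIter L T A) := fun AB n =>
      Subdeg_mono_right L (fun p => hELf n p)
    have hvI_le : ∀ AB ∈ T, ∀ p,
        L.mul (Subdeg L AB.1 (omegaIter L T A)) (AB.2 p) ≤ omegaIter L T A p :=
      fun AB hAB p => vInf_le_omega L h hfin hT A hAB p
    have hcond : ∃ n1, ∀ n, n1 ≤ n → ∀ AB ∈ hfin.toFinset, ∀ q, AB.1 q ≠ 0 →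
        (((∃ m, iter L T A m q = omegaIter L T A q) → iter L T A n q = omegaIter L T A q) ∧
         (Subdeg L AB.1 (omegaIter L T A) < L.imp (AB.1 q) (omegaIter L T A q) →
           Subdeg L AB.1 (omegaIter L T A) < L.imp (AB.1 q) (iter L T A n q)) ∧
         (AB.1 q < omegaIter L T A q → AB.1 q ≤ iter L T A n q ∨
           (∃ m, iter L T A m q = omegaIter L T A q))) := by
      have := eventually_finset hfin.toFinset
        (fun AB n => ∀ q, AB.1 q ≠ 0 →
          (((∃ m, iter L T A m q = omegaIter L T A q) →
              iter L T A n q = omegaIter L T A q) ∧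
           (Subdeg L AB.1 (omegaIter L T A) < L.imp (AB.1 q) (omegaIter L T A q) →
             Subdeg L AB.1 (omegaIter L T A) < L.imp (AB.1 q) (iter L T A n q)) ∧
           (AB.1 q < omegaIter L T A q → AB.1 q ≤ iter L T A n q ∨
             (∃ m, iter L T A m q = omegaIter L T A q))))
        ?_ ?_
      · obtain ⟨N, hN⟩ := this
        exact ⟨N, fun n hn AB hAB q hq => hN n hn AB hAB q hq⟩
      · intro AB hAB n m hnm hP q hq
        obtain ⟨h1, h2, h3⟩ := hP q hq
        refine ⟨fun hatt => le_antisymm (hELf m q) ?_, fun hlt =>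
          lt_of_lt_of_le (h2 hlt) (imp_mono_right L _ (hmono q hnm)), fun hlt => ?_⟩
        · exact le_trans (le_of_eq (h1 hatt).symm) (hmono q hnm)
        · rcases h3 hlt with h4 | h4
          · exact Or.inl (le_trans h4 (hmono q hnm))
          · exact Or.inr h4
      · intro AB hAB
        have hABT : AB ∈ T := hfin.mem_toFinset.1 hAB
        have := eventually_finset (hT AB hABT).1.toFinset
          (fun q n =>
            (((∃ m, iter L T A m q = omegaIter L T A q) →
                iter L T A n q = omegaIter L T A q) ∧
             (Subdeg L AB.1 (omegaIter L T A) < L.imp (AB.1 q) (omegaIter L T A q) →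
               Subdeg L AB.1 (omegaIter L T A) < L.imp (AB.1 q) (iter L T A n q)) ∧
             (AB.1 q < omegaIter L T A q → AB.1 q ≤ iter L T A n q ∨
               (∃ m, iter L T A m q = omegaIter L T A q))))
          ?_ ?_
        · obtain ⟨N, hN⟩ := this
          refine ⟨N, fun q hq => hN N (le_refl N) q ((hT AB hABT).1.mem_toFinset.2 hq)⟩
        · intro q hq n m hnm hP
          obtain ⟨h1, h2, h3⟩ := hP
          refine ⟨fun hatt => le_antisymm (hELf m q) ?_, fun hlt =>
            lt_of_lt_of_le (h2 hlt) (imp_mono_right L _ (hmono q hnm)), fun hlt => ?_⟩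
          · exact le_trans (le_of_eq (h1 hatt).symm) (hmono q hnm)
          · rcases h3 hlt with h4 | h4
            · exact Or.inl (le_trans h4 (hmono q hnm))
            · exact Or.inr h4
        · intro q hq
          have e1 : ∃ n, (∃ m, iter L T A m q = omegaIter L T A q) →
              iter L T A n q = omegaIter L T A q := by
            by_cases hatt : ∃ m, iter L T A m q = omegaIter L T A q
            · obtain ⟨m, hm⟩ := hatt
              exact ⟨m, fun _ => hm⟩
            · exact ⟨0, fun hc => absurd hc hatt⟩
          have e2 : ∃ n, Subdeg L AB.1 (omegaIter L T A) <
              L.imp (AB.1 q) (omegaIter L T A q) →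
              Subdeg L AB.1 (omegaIter L T A) < L.imp (AB.1 q) (iter L T A n q) := by
            by_cases hlt : Subdeg L AB.1 (omegaIter L T A) <
                L.imp (AB.1 q) (omegaIter L T A q)
            · have hiS : L.imp (AB.1 q) (omegaIter L T A q) =
                  ⨆ n, L.imp (AB.1 q) (iter L T A n q) :=
                imp_iSup h (AB.1 q) (fun n => iter L T A n q)
              rw [hiS] at hlt
              obtain ⟨n, hn⟩ := lt_iSup_iff.1 hlt
              exact ⟨n, fun _ => hn⟩
            · exact ⟨0, fun hc => absurd hc hlt⟩
          have e3 : ∃ n, AB.1 q < omegaIter L T A q → AB.1 q ≤ iter L T A n q ∨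
              (∃ m, iter L T A m q = omegaIter L T A q) := by
            by_cases hlt : AB.1 q < omegaIter L T A q
            · obtain ⟨n, hn⟩ := lt_iSup_iff.1 (hlt : AB.1 q < ⨆ n, iter L T A n q)
              exact ⟨n, fun _ => Or.inl (le_of_lt hn)⟩
            · exact ⟨0, fun hc => absurd hc hlt⟩
          obtain ⟨na, hna⟩ := e1
          obtain ⟨nb, hnb⟩ := e2
          obtain ⟨nc, hnc⟩ := e3
          refine ⟨na ⊔ (nb ⊔ nc), ?_, ?_, ?_⟩
          · intro hatt
            refine le_antisymm (hELf _ q) ?_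
            exact le_trans (le_of_eq (hna hatt).symm) (hmono q le_sup_left)
          · intro hlt
            exact lt_of_lt_of_le (hnb hlt)
              (imp_mono_right L _ (hmono q (le_trans le_sup_left le_sup_right)))
          · intro hlt
            rcases hnc hlt with h4 | h4
            · exact Or.inl (le_trans h4 (hmono q (le_trans le_sup_right le_sup_right)))
            · exact Or.inr h4
    obtain ⟨n1, hn1⟩ := hcond
    set Z := (UF.sup fun p => L.imp (omegaIter L T A p) (iter L T A n1 p)) ⊔
      ((UF.sup fun p => L.imp (omegaIter L T A p) 0) ⊔
       (UF.sup fun p => hfin.toFinset.sup fun AB =>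
         if L.mul (Subdeg L AB.1 (omegaIter L T A)) (AB.2 p) < omegaIter L T A p
         then L.imp (omegaIter L T A p)
           (L.mul (Subdeg L AB.1 (omegaIter L T A)) (AB.2 p)) else 0)) with hZdef
    have hb1 : (⊥:UI) < 1 := by
      rw [UI.bot_eq_zero]
      exact UI.lt_iff.2 (by norm_num)
    have hZlt : Z < 1 := by
      rw [hZdef]
      refine sup_lt_iff.2 ⟨?_, sup_lt_iff.2 ⟨?_, ?_⟩⟩
      · refine (Finset.sup_lt_iff hb1).2 fun p hp => ?_
        exact (imp_lt_one_iff L).2 (hUlt p (Finset.mem_filter.1 hp).2 n1)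
      · refine (Finset.sup_lt_iff hb1).2 fun p hp => ?_
        exact (imp_lt_one_iff L).2 (hU0 p (Finset.mem_filter.1 hp).2)
      · refine (Finset.sup_lt_iff hb1).2 fun p hp => ?_
        refine (Finset.sup_lt_iff hb1).2 fun AB hAB => ?_
        split_ifs with hv
        · exact (imp_lt_one_iff L).2 hv
        · exact UI.lt_iff.2 (by norm_num)
    have hZ1 : ∀ p, (∀ n, iter L T A n p ≠ omegaIter L T A p) →
        L.imp (omegaIter L T A p) (iter L T A n1 p) ≤ Z := by
      intro p hp
      rw [hZdef]
      exact le_trans (Finset.le_sup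
        (f := fun p => L.imp (omegaIter L T A p) (iter L T A n1 p)) (hUFmem p hp))
        le_sup_left
    have hZ2 : ∀ p, (∀ n, iter L T A n p ≠ omegaIter L T A p) →
        L.imp (omegaIter L T A p) 0 ≤ Z := by
      intro p hp
      rw [hZdef]
      exact le_trans (Finset.le_sup
        (f := fun p => L.imp (omegaIter L T A p) 0) (hUFmem p hp))
        (le_trans le_sup_left le_sup_right)
    have hZ3 : ∀ p, (∀ n, iter L T A n p ≠ omegaIter L T A p) → ∀ AB ∈ hfin.toFinset,
        L.mul (Subdeg L AB.1 (omegaIter L T A)) (AB.2 p) < omegaIter L T A p →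
        L.imp (omegaIter L T A p)
          (L.mul (Subdeg L AB.1 (omegaIter L T A)) (AB.2 p)) ≤ Z := by
      intro p hp AB hAB hv
      rw [hZdef]
      have step1 : L.imp (omegaIter L T A p)
          (L.mul (Subdeg L AB.1 (omegaIter L T A)) (AB.2 p)) =
          (if L.mul (Subdeg L AB.1 (omegaIter L T A)) (AB.2 p) < omegaIter L T A p
           then L.imp (omegaIter L T A p)
             (L.mul (Subdeg L AB.1 (omegaIter L T A)) (AB.2 p)) else 0) := (if_pos hv).symm
      rw [step1]
      refine le_trans (Finset.le_sup (f := fun AB =>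
        if L.mul (Subdeg L AB.1 (omegaIter L T A)) (AB.2 p) < omegaIter L T A p
        then L.imp (omegaIter L T A p)
          (L.mul (Subdeg L AB.1 (omegaIter L T A)) (AB.2 p)) else 0) hAB) ?_
      exact le_trans (Finset.le_sup
        (f := fun p => hfin.toFinset.sup fun AB =>
          if L.mul (Subdeg L AB.1 (omegaIter L T A)) (AB.2 p) < omegaIter L T A p
          then L.imp (omegaIter L T A p)
            (L.mul (Subdeg L AB.1 (omegaIter L T A)) (AB.2 p)) else 0) (hUFmem p hp))
        (le_trans le_sup_right le_sup_right)
    have hmain : ∀ n, n1 ≤ n → ∀ p, (∀ m, iter L T A m p ≠ omegaIter L T A p) →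
        L.imp (omegaIter L T A p) (iter L T A n p) ≤ Z := by
      intro n hn
      induction n, hn using Nat.le_induction with
      | base => exact fun p hp => hZ1 p hp
      | succ n hn ih =>
        intro p hp
        rw [iter_succ L T hfin A n p, imp_sup]
        refine sup_le (ih p hp) ?_
        refine imp_finsetSup_le L _ _ _ _ (hZ2 p hp) ?_
        intro AB hAB
        have hABT : AB ∈ T := hfin.mem_toFinset.1 hAB
        have hvle : L.mul (Subdeg L AB.1 (iter L T A n)) (AB.2 p) ≤
            L.mul (Subdeg L AB.1 (omegaIter L T A)) (AB.2 p) :=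
          mul_mono_left L _ (hsdeg_le AB n)
        rcases lt_or_eq_of_le (hvI_le AB hABT p) with hv | hv
        · exact le_trans (imp_mono_right L _ hvle) (hZ3 p hp AB hAB hv)
        · by_cases hveq : L.mul (Subdeg L AB.1 (iter L T A n)) (AB.2 p) = omegaIter L T A p
          · exact absurd (le_antisymm (hELf (n+1) p)
              (le_trans (le_of_eq hveq.symm) (term_le_iter_succ L T A hABT n p))) (hp (n+1))
          · have hslt : Subdeg L AB.1 (iter L T A n) < Subdeg L AB.1 (omegaIter L T A) := by
              rcases lt_or_eq_of_le (hsdeg_le AB n) with hs | hs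
              · exact hs
              · exact absurd (by rw [hs, hv]) hveq
            have hsup_ne : ((hT AB hABT).1.toFinset).Nonempty := by
              rw [Finset.nonempty_iff_ne_empty]
              intro hemp
              have h1 : Subdeg L AB.1 (iter L T A n) = 1 := by
                rw [Subdeg_eq_finsetInf L (hT AB hABT).1, hemp, Finset.inf_empty,
                  UI.top_eq_one]
              rw [h1] at hslt
              exact absurd (lt_of_lt_of_le hslt (UI.le_one _)) (lt_irrefl 1)
            obtain ⟨qh, hqmem, hqeq⟩ := Finset.exists_mem_eq_inf _ hsup_ne
              (fun q => L.imp (AB.1 q) (iter L T A n q))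
            have haq0 : AB.1 qh ≠ 0 := (hT AB hABT).1.mem_toFinset.1 hqmem
            have hsdeg_eq : Subdeg L AB.1 (iter L T A n) =
                L.imp (AB.1 qh) (iter L T A n qh) := by
              rw [Subdeg_eq_finsetInf L (hT AB hABT).1]; exact hqeq
            obtain ⟨hc1, hc2, hc3⟩ := hn1 n hn AB hAB qh haq0
            have hqU : ∀ m, iter L T A m qh ≠ omegaIter L T A qh := by
              intro m hm
              have hatt := hc1 ⟨m, hm⟩
              rw [hatt] at hsdeg_eq
              have hge : Subdeg L AB.1 (omegaIter L T A) ≤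
                  Subdeg L AB.1 (iter L T A n) := by
                rw [hsdeg_eq]
                exact Subdeg_le_imp L AB.1 (omegaIter L T A) qh
              exact absurd (lt_of_lt_of_le hslt hge) (lt_irrefl _)
            have hf2 : L.imp (AB.1 qh) (omegaIter L T A qh) =
                Subdeg L AB.1 (omegaIter L T A) := by
              refine le_antisymm ?_ (Subdeg_le_imp L AB.1 _ qh)
              by_contra hgt
              have hlt2 := hc2 (lt_of_le_of_ne (Subdeg_le_imp L AB.1 _ qh)
                (fun he => hgt (le_of_eq he.symm)))
              rw [← hsdeg_eq] at hlt2
              exact absurd (lt_trans hslt hlt2) (lt_irrefl _)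
            have hf3 : omegaIter L T A qh ≤ AB.1 qh := by
              by_contra hgt
              rcases hc3 (not_le.1 hgt) with h4 | h4
              · have h5 : L.imp (AB.1 qh) (iter L T A n qh) = 1 :=
                  (imp_eq_one_iff L).2 h4
                rw [h5] at hsdeg_eq
                rw [hsdeg_eq] at hslt
                exact absurd (lt_of_lt_of_le hslt (UI.le_one _)) (lt_irrefl _)
              · obtain ⟨m, hm⟩ := h4
                exact hqU m hm
            have hf4 : iter L T A n qh < omegaIter L T A qh := hUlt qh hqU n
            have hcore := coreIneq h hf2.symm hv.symm
              (by rw [hsdeg_eq] :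
                L.mul (Subdeg L AB.1 (iter L T A n)) (AB.2 p) =
                L.mul (L.imp (AB.1 qh) (iter L T A n qh)) (AB.2 p))
              hf3 hf4 (hU0 p hp)
            exact le_trans hcore (sup_le (ih qh hqU) (hZ2 p hp))
    have hble : ∀ n, iter L T A n p₀ ≤ L.mul Z (omegaIter L T A p₀) := by
      intro n
      have key : ∀ m, n1 ≤ m → iter L T A m p₀ ≤ L.mul Z (omegaIter L T A p₀) := by
        intro m hm
        refine le_trans (div_le h (hELf m p₀)) ?_
        exact mul_mono_left L _ (hmain m hm p₀ hp₀)
      rcases le_total n n1 with hn | hn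
      · exact le_trans (hmono p₀ hn) (key n1 (le_refl n1))
      · exact key n hn
    have hcontra : omegaIter L T A p₀ ≤ L.mul Z (omegaIter L T A p₀) := iSup_le hble
    exact absurd (lt_of_le_of_lt hcontra (mul_lt_of_lt_one h hZlt (hU0 p₀ hp₀)))
      (lt_irrefl _)
  choose f hf using hAttAll
  refine ⟨hS2fin.toFinset.sup f, funext fun p => ?_⟩
  have hNp : iter L T A (hS2fin.toFinset.sup f) p = omegaIter L T A p := by
    by_cases hp : p ∈ (⋃ AB ∈ T, {p | AB.2 p ≠ 0})
    · have hle : f p ≤ hS2fin.toFinset.sup f := Finset.le_sup (hS2fin.mem_toFinset.2 hp)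
      exact le_antisymm (hELf _ p) (le_trans (le_of_eq (hf p).symm) (hmono p hle))
    · exact hout p hp _
  have hNp1 : iter L T A (hS2fin.toFinset.sup f + 1) p = omegaIter L T A p :=
    le_antisymm (hELf _ p) (le_trans (le_of_eq hNp.symm) (hmono p (Nat.le_succ _)))
  rw [hNp1, hNp]

end RFAL


open RFAL

/-- for Łukasiewicz or product operations, a finite theory Σ and
    a rational fuzzy attribute implication A ⇒ B, the provability degree
    |A⇒B|_Σ is rational and the supremum is attained: Σ ⊢ A ⇒ c⊗B for
    c = |A⇒B|_Σ. -/
theorem provDeg_rational_and_attained {V : Type} [Countable V] (L : RStr)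
    (h : (L.mul = lukMul ∧ L.imp = lukImp) ∨ (L.mul = prodMul ∧ L.imp = prodImp))
    (T : Set ((V → UI) × (V → UI))) (hT : IsTheory T) (hfin : T.Finite)
    (A B : V → UI) (hAf : FinSet A) (hAr : RatSet A) (hBf : FinSet B) (hBr : RatSet B) :
    IsRatUI (provDeg L T A B) ∧ Proves L T A (csmul L (provDeg L T A B) B) := by
  obtain ⟨N, hN⟩ := iter_stabilizes L h hfin hT A
  have hmodel : ∀ AB ∈ T, Subdeg L AB.1 (iter L T A N) ≤ Subdeg L AB.2 (iter L T A N) := by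
    intro AB hAB
    refine (le_Subdeg_iff L).2 fun q => ?_
    calc L.mul (Subdeg L AB.1 (iter L T A N)) (AB.2 q)
        ≤ iter L T A (N+1) q := term_le_iter_succ L T A hAB N q
      _ = iter L T A N q := by rw [hN]
  have hrat : IsRatUI (Subdeg L B (iter L T A N)) := by
    rw [Subdeg_eq_finsetInf L hBf]
    exact isRat_finsetInf _ _ fun q _ =>
      isRat_imp h (hBr q) (iter_ratSet L h hfin hT hAr N q)
  have hprv : Proves L T A (csmul L (Subdeg L B (iter L T A N)) B) := by
    refine prv_of_le_iter L h hfin hT hAf hAr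
      (finSet_csmul L _ hBf) (ratSet_csmul L h hrat hBr) N fun p => ?_
    exact mul_Subdeg_le L B (iter L T A N) p
  have hub : ∀ c ∈ {c : UI | IsRatUI c ∧ Proves L T A (csmul L c B)},
      c ≤ Subdeg L B (iter L T A N) := by
    intro c hc
    have hs := sound L T hc.2 (iter L T A N) hmodel
    have hA1 : Subdeg L A (iter L T A N) = 1 :=
      (Subdeg_eq_one_iff L).2 fun p => iter_mono L T A p (Nat.zero_le N)
    rw [hA1, Subdeg_csmul] at hs
    exact (imp_eq_one_iff L).1 (le_antisymm (UI.le_one _) hs)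
  have heq : provDeg L T A B = Subdeg L B (iter L T A N) :=
    le_antisymm (sSup_le hub) (le_sSup ⟨hrat, hprv⟩)
  rw [heq]
  exact ⟨hrat, hprv⟩
end
end

section
/- Least-model characterization of provability degrees: if L is rationally closed and satisfies ⨆_{i∈I}(a → b_i) = a → ⨆_{i∈I} b_i for all a and all families {b_i}, then for any theory Σ and any rational fuzzy attribute implication A ⇒ B: |A⇒B|_Σ = S(B, A^ω_Σ), where A^ω_Σ is the iterated closure of A (regarded as an evaluation) under Σ. -/
/- Common framework for Rational Fuzzy Attribute Logic (RFAL):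
   truth degrees in the real unit interval, fuzzy sets, subsethood,
   the deductive system (axioms, Cut, Mul), provability and semantic
   entailment degrees, and the least-model iteration. -/

open scoped Classical
noncomputable section

variable {V : Type}

namespace RFALaux

variable {V : Type}

lemma ratUI_zero : IsRatUI (0:UI) := ⟨0, by norm_num⟩

lemma ratUI_sup {a b : UI} (ha : IsRatUI a) (hb : IsRatUI b) : IsRatUI (a ⊔ b) := by
  rcases le_total a b with h | h
  · rw [sup_eq_right.mpr h]; exact hb
  · rw [sup_eq_left.mpr h]; exact ha

lemma le_of_forall_rat_lt {x y : UI} (h : ∀ c : UI, IsRatUI c → c < x → c ≤ y) : x ≤ y := by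
  by_contra hxy
  obtain ⟨q, hq1, hq2⟩ := exists_rat_btwn (show (y:ℝ) < x from not_le.mp hxy)
  have h0 : (0:ℝ) ≤ q := le_trans y.2.1 hq1.le
  have h1 : (q:ℝ) ≤ 1 := le_trans hq2.le x.2.2
  have h2 : (q:ℝ) ≤ (y:ℝ) :=
    Subtype.coe_le_coe.mpr (h ⟨q,h0,h1⟩ ⟨q,rfl⟩ (Subtype.mk_lt_mk.mpr hq2))
  exact absurd hq1 (not_lt.mpr h2)

lemma lt_iSup_exists {ι : Type*} {f : ι → UI} {a : UI} (h : a < ⨆ i, f i) : ∃ i, a < f i := by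
  by_contra h'; push_neg at h'; exact absurd (iSup_le h') (not_le.mpr h)

variable (L : RStr)

lemma one_mul' (a : UI) : L.mul 1 a = a := by rw [L.mul_comm]; exact L.mul_one a

lemma mul_mono_l {a a' : UI} (b : UI) (h : a ≤ a') : L.mul a b ≤ L.mul a' b :=
  (L.adjoint a b _).mpr (le_trans h ((L.adjoint a' b _).mp le_rfl))

lemma mul_mono_r (a : UI) {b b' : UI} (h : b ≤ b') : L.mul a b ≤ L.mul a b' := by
  rw [L.mul_comm a b, L.mul_comm a b']; exact mul_mono_l L a h

lemma imp_mono_r (a : UI) {b b' : UI} (h : b ≤ b') : L.imp a b ≤ L.imp a b' :=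
  (L.adjoint _ _ _).mp (le_trans ((L.adjoint _ _ _).mpr le_rfl) h)

lemma imp_anti_l {a a' : UI} (h : a ≤ a') (b : UI) : L.imp a' b ≤ L.imp a b :=
  (L.adjoint _ _ _).mp (le_trans (mul_mono_r L _ h) ((L.adjoint _ _ _).mpr le_rfl))

lemma imp_eq_one {a b : UI} (h : a ≤ b) : L.imp a b = 1 :=
  le_antisymm le_top ((L.adjoint 1 a b).mp (le_trans (le_of_eq (one_mul' L a)) h))

lemma le_of_one_le_imp {a b : UI} (h : (1:UI) ≤ L.imp a b) : a ≤ b := by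
  have h2 := (L.adjoint 1 a b).mpr h
  rwa [one_mul' L a] at h2

lemma mul_bot (a : UI) : L.mul a 0 = 0 := by
  have h := L.mul_iSup Empty a Empty.elim
  rw [iSup_of_empty, iSup_of_empty] at h
  exact h

lemma mul_sup (a b c : UI) : L.mul a (b ⊔ c) = L.mul a b ⊔ L.mul a c := by
  have h := L.mul_iSup Bool a (fun i => cond i b c)
  rw [iSup_bool_eq, iSup_bool_eq] at h
  exact h

lemma imp_sup (a b c : UI) : L.imp (a ⊔ b) c = L.imp a c ⊓ L.imp b c := by
  apply le_antisymm
  · exact le_inf (imp_anti_l L le_sup_left c) (imp_anti_l L le_sup_right c)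
  · refine (L.adjoint _ _ _).mp ?_
    rw [mul_sup]
    exact sup_le ((L.adjoint _ _ _).mpr inf_le_left) ((L.adjoint _ _ _).mpr inf_le_right)

lemma mul_rot (x c a : UI) : L.mul x (L.mul c a) = L.mul (L.mul x a) c := by
  rw [L.mul_comm c a, ← L.mul_assoc]

lemma imp_curry (c a b : UI) : L.imp (L.mul c a) b = L.imp a (L.imp c b) := by
  have key : ∀ x : UI, x ≤ L.imp (L.mul c a) b ↔ x ≤ L.imp a (L.imp c b) := by
    intro x
    constructor
    · intro h
      have h1 : L.mul x (L.mul c a) ≤ b := (L.adjoint _ _ _).mpr h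
      rw [mul_rot] at h1
      exact (L.adjoint _ _ _).mp ((L.adjoint _ _ _).mp h1)
    · intro h
      have h1 : L.mul (L.mul x a) c ≤ b := (L.adjoint _ _ _).mpr ((L.adjoint _ _ _).mpr h)
      rw [← mul_rot] at h1
      exact (L.adjoint _ _ _).mp h1
  exact le_antisymm ((key _).mp le_rfl) ((key _).mpr le_rfl)

lemma imp_comm (c a b : UI) : L.imp c (L.imp a b) = L.imp a (L.imp c b) := by
  rw [← imp_curry, ← imp_curry, L.mul_comm a c]

lemma imp_iInf {ι : Type*} (a : UI) (f : ι → UI) :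
    L.imp a (⨅ i, f i) = ⨅ i, L.imp a (f i) := by
  apply le_antisymm
  · exact le_iInf fun i => imp_mono_r L a (iInf_le f i)
  · exact (L.adjoint _ _ _).mp (le_iInf fun i => (L.adjoint _ _ _).mpr (iInf_le _ i))

lemma Subdeg_le' (C e : V → UI) (p : V) : Subdeg L C e ≤ L.imp (C p) (e p) := iInf_le _ p

lemma Subdeg_mono (C : V → UI) {e e' : V → UI} (h : ∀ p, e p ≤ e' p) :
    Subdeg L C e ≤ Subdeg L C e' := iInf_mono fun p => imp_mono_r L _ (h p)

lemma Subdeg_eq_one {C e : V → UI} (h : ∀ p, C p ≤ e p) : Subdeg L C e = 1 :=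
  le_antisymm le_top (le_iInf fun p => (imp_eq_one L (h p)).ge)

lemma Subdeg_funion (A B e : V → UI) :
    Subdeg L (funion A B) e = Subdeg L A e ⊓ Subdeg L B e := by
  calc Subdeg L (funion A B) e = ⨅ p, (L.imp (A p) (e p) ⊓ L.imp (B p) (e p)) :=
        iInf_congr fun p => imp_sup L (A p) (B p) (e p)
    _ = _ := iInf_inf_eq

lemma Subdeg_csmul (c : UI) (A e : V → UI) :
    Subdeg L (csmul L c A) e = Subdeg L A (fun p => L.imp c (e p)) :=
  iInf_congr fun p => imp_curry L c (A p) (e p)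

variable (T : Set ((V → UI) × (V → UI)))

lemma model_le {e : V → UI} (hm : IsModel L T e) {AB} (h : AB ∈ T) :
    Subdeg L AB.1 e ≤ Subdeg L AB.2 e :=
  le_of_one_le_imp L (ge_of_eq (hm AB h))

lemma model_shift {e : V → UI} (hm : IsModel L T e) (a : UI) :
    IsModel L T (fun p => L.imp a (e p)) := by
  intro AB hAB
  have hS : ∀ C : V → UI, Subdeg L C (fun p => L.imp a (e p)) = L.imp a (Subdeg L C e) := by
    intro C
    calc Subdeg L C (fun p => L.imp a (e p))
        = ⨅ p, L.imp a (L.imp (C p) (e p)) := iInf_congr fun p => imp_comm L (C p) a (e p)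
      _ = L.imp a (⨅ p, L.imp (C p) (e p)) := (imp_iInf L a _).symm
  show L.imp (Subdeg L AB.1 _) (Subdeg L AB.2 _) = 1
  rw [hS, hS]
  exact imp_eq_one L (imp_mono_r L a (model_le L T hm hAB))

lemma sound {C D : V → UI} (h : Proves L T C D) :
    ∀ e, IsModel L T e → Subdeg L C e ≤ Subdeg L D e := by
  induction h with
  | ax A B _ _ _ _ => intro e _; rw [Subdeg_funion]; exact inf_le_right
  | hyp A B hmem => intro e hm; exact model_le L T hm hmem
  | cut A B C' D' h1 h2 ih1 ih2 =>
      intro e hm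
      rw [Subdeg_funion]
      calc Subdeg L A e ⊓ Subdeg L C' e ≤ Subdeg L B e ⊓ Subdeg L C' e :=
            inf_le_inf_right _ (ih1 e hm)
        _ = Subdeg L (funion B C') e := (Subdeg_funion L B C' e).symm
        _ ≤ Subdeg L D' e := ih2 e hm
  | mul A B c hc h ih =>
      intro e hm
      rw [Subdeg_csmul, Subdeg_csmul]
      exact ih _ (model_shift L T hm c)

/- basic fuzzy-set facts -/

lemma sup_zero (a : UI) : a ⊔ 0 = a := by
  rw [show (0:UI) = ⊥ from rfl]; exact sup_bot_eq a

lemma zero_sup (a : UI) : (0:UI) ⊔ a = a := by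
  rw [show (0:UI) = ⊥ from rfl]; exact bot_sup_eq a

lemma zero_le' (a : UI) : (0:UI) ≤ a := bot_le

lemma finZ : FinSet (fun _ : V => (0:UI)) := by
  simp [FinSet]

lemma ratZ : RatSet (fun _ : V => (0:UI)) := fun _ => ratUI_zero

lemma funion_zero_right (A : V → UI) : funion A (fun _ => (0:UI)) = A :=
  funext fun p => sup_zero (A p)

lemma funion_self (A : V → UI) : funion A A = A := funext fun p => sup_idem (A p)

lemma funion_absorb {A B : V → UI} (h : ∀ p, B p ≤ A p) : funion A B = A :=
  funext fun p => sup_eq_left.mpr (h p)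

lemma fin_funion {A B : V → UI} (hA : FinSet A) (hB : FinSet B) : FinSet (funion A B) := by
  apply (hA.union hB).subset
  intro p hp
  simp only [Set.mem_union, Set.mem_setOf_eq]
  by_contra h
  push_neg at h
  exact hp (show A p ⊔ B p = 0 by rw [h.1, h.2, sup_zero])

lemma rat_funion {A B : V → UI} (hA : RatSet A) (hB : RatSet B) : RatSet (funion A B) :=
  fun p => ratUI_sup (hA p) (hB p)

lemma fin_sing (p : V) (a : UI) : FinSet (sing p a) := by
  apply (Set.finite_singleton p).subset
  intro v hv
  simp only [Set.mem_setOf_eq, sing] at hv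
  simp only [Set.mem_singleton_iff]
  by_contra h
  simp [h] at hv

lemma rat_sing (p : V) {a : UI} (ha : IsRatUI a) : RatSet (sing p a) := by
  intro v
  unfold sing
  split
  · exact ha
  · exact ratUI_zero

lemma fin_csmul {A : V → UI} (hA : FinSet A) (c : UI) : FinSet (csmul L c A) := by
  apply hA.subset
  intro p hp
  simp only [Set.mem_setOf_eq, csmul] at hp ⊢
  by_contra h
  rw [h, mul_bot] at hp
  exact hp rfl

lemma rat_csmul (hrc : L.RationallyClosed) {A : V → UI} (hA : RatSet A) {c : UI}
    (hc : IsRatUI c) : RatSet (csmul L c A) :=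
  fun p => (hrc c (A p) hc (hA p)).1

/- proof-theoretic helpers -/

lemma provesZero {A : V → UI} (hAf : FinSet A) (hAr : RatSet A) :
    Proves L T A (fun _ => (0:UI)) := by
  have h := Proves.ax (L := L) (T := T) A (fun _ => (0:UI)) hAf hAr finZ ratZ
  rwa [funion_zero_right] at h

lemma comp {A B C : V → UI} (h1 : Proves L T A B) (h2 : Proves L T B C) :
    Proves L T A C := by
  have h3 : Proves L T (funion B (fun _ => 0)) C := by rwa [funion_zero_right]
  have h4 := Proves.cut A B (fun _ => 0) C h1 h3
  rwa [funion_zero_right] at h4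

lemma weaken {A E D : V → UI} (h : Proves L T A E) (hEf : FinSet E) (hEr : RatSet E)
    (hDf : FinSet D) (hDr : RatSet D) (hle : ∀ p, D p ≤ E p) : Proves L T A D := by
  have hax : Proves L T (funion E D) D := Proves.ax E D hEf hEr hDf hDr
  rw [funion_absorb hle] at hax
  exact comp L T h hax

lemma provesUnion {A B1 B2 : V → UI} (hAf : FinSet A) (hAr : RatSet A)
    (hB1f : FinSet B1) (hB1r : RatSet B1) (hB2f : FinSet B2) (hB2r : RatSet B2)
    (h1 : Proves L T A B1) (h2 : Proves L T A B2) : Proves L T A (funion B1 B2) := by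
  have hax : Proves L T (funion A (funion B1 B2)) (funion B1 B2) :=
    Proves.ax A (funion B1 B2) hAf hAr (fin_funion hB1f hB2f) (rat_funion hB1r hB2r)
  have heq1 : funion B2 (funion B1 A) = funion A (funion B1 B2) := by
    funext p
    show B2 p ⊔ (B1 p ⊔ A p) = A p ⊔ (B1 p ⊔ B2 p)
    ac_rfl
  rw [← heq1] at hax
  have s1 := Proves.cut A B2 (funion B1 A) (funion B1 B2) h2 hax
  have heq2 : funion A (funion B1 A) = funion B1 A := by
    funext p
    show A p ⊔ (B1 p ⊔ A p) = B1 p ⊔ A p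
    rw [sup_comm (B1 p) (A p), ← sup_assoc, sup_idem]
    
  rw [heq2] at s1
  have s2 := Proves.cut A B1 A (funion B1 B2) h1 s1
  rwa [funion_self] at s2

lemma fin_restrict (f : V → UI) (F : Finset V) :
    FinSet (fun v => if v ∈ F then f v else 0) := by
  apply F.finite_toSet.subset
  intro v hv
  simp only [Set.mem_setOf_eq] at hv
  by_contra h
  rw [Finset.mem_coe] at h
  simp [h] at hv

lemma rat_restrict {f : V → UI} (hr : ∀ v, IsRatUI (f v)) (F : Finset V) :
    RatSet (fun v => if v ∈ F then f v else 0) := by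
  intro v
  by_cases h : v ∈ F
  · simpa [h] using hr v
  · simpa [h] using ratUI_zero

lemma provesFinUnion {A : V → UI} (hAf : FinSet A) (hAr : RatSet A) (f : V → UI)
    (hr : ∀ v, IsRatUI (f v)) (hp : ∀ v, Proves L T A (sing v (f v))) (F : Finset V) :
    Proves L T A (fun v => if v ∈ F then f v else 0) := by
  classical
  induction F using Finset.induction_on with
  | empty =>
      have heq : (fun v => if v ∈ (∅ : Finset V) then f v else (0:UI)) = (fun _ : V => (0:UI)) := by
        funext v; simp
      rw [heq]
      exact provesZero L T hAf hAr
  | @insert a F' ha ih =>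
      have heq : (fun v => if v ∈ insert a F' then f v else (0:UI))
          = funion (sing a (f a)) (fun v => if v ∈ F' then f v else 0) := by
        funext v
        simp only [funion, sing, Finset.mem_insert]
        by_cases hv : v = a
        · subst hv; simp [ha, sup_zero]
        · simp [hv, zero_sup]
      rw [heq]
      exact provesUnion L T hAf hAr (fin_sing a (f a)) (rat_sing a (hr a))
        (fin_restrict f F') (rat_restrict hr F') (hp a) ih

lemma provesSing_self {A : V → UI} (hAf : FinSet A) (hAr : RatSet A) (p : V) :
    Proves L T A (sing p (A p)) := by
  have hax : Proves L T (funion A (sing p (A p))) (sing p (A p)) :=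
    Proves.ax A (sing p (A p)) hAf hAr (fin_sing p (A p)) (rat_sing p (hAr p))
  have heq : funion A (sing p (A p)) = A := by
    apply funion_absorb
    intro v
    unfold sing
    by_cases h : v = p
    · rw [if_pos h, h]
    · rw [if_neg h]; exact zero_le' _
  rwa [heq] at hax

/- the syntactic closure -/

def synCl (A : V → UI) : V → UI :=
  fun p => sSup {c | IsRatUI c ∧ Proves L T A (sing p c)}

lemma star (hrc : L.RationallyClosed) (hd : L.ImpSupDistrib)
    {A : V → UI} (hAf : FinSet A) (hAr : RatSet A)
    {C : V → UI} (hCf : FinSet C) (hCr : RatSet C)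
    {c : UI} (hc : IsRatUI c) (hlt : c < Subdeg L C (synCl L T A)) :
    Proves L T A (csmul L c C) := by
  classical
  have hchoice : ∀ v : V, ∃ x : UI,
      (IsRatUI x ∧ Proves L T A (sing v x)) ∧ L.mul c (C v) ≤ x := by
    intro v
    have h1 : c < L.imp (C v) (synCl L T A v) :=
      lt_of_lt_of_le hlt (Subdeg_le' L C _ v)
    have h2 : synCl L T A v = ⨆ x : {x : UI | IsRatUI x ∧ Proves L T A (sing v x)}, (x : UI) :=
      sSup_eq_iSup' _
    rw [h2, ← hd _ (C v) _] at h1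
    obtain ⟨x, hx⟩ := lt_iSup_exists h1
    exact ⟨x.1, x.2, (L.adjoint _ _ _).mpr hx.le⟩
  choose f hf using hchoice
  have hE := provesFinUnion L T hAf hAr f (fun v => (hf v).1.1) (fun v => (hf v).1.2)
    hCf.toFinset
  apply weaken L T hE (fin_restrict f hCf.toFinset)
    (rat_restrict (fun v => (hf v).1.1) hCf.toFinset)
    (fin_csmul L hCf c) (rat_csmul L hrc hCr hc)
  intro p
  by_cases hp : p ∈ hCf.toFinset
  · simp only [hp, if_true]
    exact (hf p).2
  · have hC0 : C p = 0 := by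
      rw [Set.Finite.mem_toFinset (hs := hCf)] at hp
      simpa [Set.mem_setOf_eq, not_not] using hp
    simp only [hp, if_false, csmul, hC0, mul_bot]
    exact le_rfl

lemma synCl_closed (hrc : L.RationallyClosed) (hd : L.ImpSupDistrib) (hT : IsTheory T)
    {A : V → UI} (hAf : FinSet A) (hAr : RatSet A) :
    ∀ AB ∈ T, ∀ p, L.mul (Subdeg L AB.1 (synCl L T A)) (AB.2 p) ≤ synCl L T A p := by
  intro AB hAB p
  rw [L.adjoint]
  apply le_of_forall_rat_lt
  intro c hc hlt
  obtain ⟨hC1f, hC1r, hC2f, hC2r⟩ := hT AB hAB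
  have h1 : Proves L T A (csmul L c AB.1) := star L T hrc hd hAf hAr hC1f hC1r hc hlt
  have h2 : Proves L T (csmul L c AB.1) (csmul L c AB.2) :=
    Proves.mul AB.1 AB.2 c hc (Proves.hyp AB.1 AB.2 hAB)
  have h3 : Proves L T A (csmul L c AB.2) := comp L T h1 h2
  have h4 : Proves L T A (sing p (L.mul c (AB.2 p))) := by
    apply weaken L T h3 (fin_csmul L hC2f c) (rat_csmul L hrc hC2r hc)
      (fin_sing p _) (rat_sing p (hrc c (AB.2 p) hc (hC2r p)).1)
    intro v
    unfold sing
    by_cases h : v = p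
    · rw [if_pos h, h]; exact le_rfl
    · rw [if_neg h]; exact zero_le' _
  have h5 : L.mul c (AB.2 p) ≤ synCl L T A p :=
    le_sSup ⟨(hrc c (AB.2 p) hc (hC2r p)).1, h4⟩
  exact (L.adjoint _ _ _).mp h5

lemma iter_le_synCl (hrc : L.RationallyClosed) (hd : L.ImpSupDistrib) (hT : IsTheory T)
    {A : V → UI} (hAf : FinSet A) (hAr : RatSet A) :
    ∀ n p, iter L T A n p ≤ synCl L T A p := by
  intro n
  induction n with
  | zero =>
      intro p
      exact le_sSup ⟨hAr p, provesSing_self L T hAf hAr p⟩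
  | succ n ih =>
      intro p
      show iter L T A n p ⊔ _ ≤ _
      apply sup_le (ih p)
      apply iSup₂_le
      intro AB hAB
      calc L.mul (Subdeg L AB.1 (iter L T A n)) (AB.2 p)
          ≤ L.mul (Subdeg L AB.1 (synCl L T A)) (AB.2 p) :=
            mul_mono_l L _ (Subdeg_mono L _ ih)
        _ ≤ synCl L T A p := synCl_closed L T hrc hd hT hAf hAr AB hAB p

lemma iter_mono (A : V → UI) (p : V) : Monotone (fun n => iter L T A n p) :=
  monotone_nat_of_le_succ (fun _ => le_sup_left)

lemma omega_model (hd : L.ImpSupDistrib) (hT : IsTheory T) (A : V → UI) :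
    IsModel L T (omegaIter L T A) := by
  intro AB hAB
  apply imp_eq_one
  show Subdeg L AB.1 _ ≤ ⨅ p, L.imp (AB.2 p) (omegaIter L T A p)
  apply le_iInf
  intro p
  apply le_of_forall_rat_lt
  intro c hc hlt
  have hn : ∀ v, ∃ n, L.mul c (AB.1 v) ≤ iter L T A n v := by
    intro v
    have h1 : c < L.imp (AB.1 v) (omegaIter L T A v) :=
      lt_of_lt_of_le hlt (Subdeg_le' L AB.1 _ v)
    have h2 : L.imp (AB.1 v) (omegaIter L T A v)
        = ⨆ n, L.imp (AB.1 v) (iter L T A n v) := (hd ℕ (AB.1 v) _).symm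
    rw [h2] at h1
    obtain ⟨n, hn⟩ := lt_iSup_exists h1
    exact ⟨n, (L.adjoint _ _ _).mpr hn.le⟩
  choose nf hnf using hn
  have hC1f : FinSet AB.1 := (hT AB hAB).1
  set N := hC1f.toFinset.sup nf with hN
  have hall : ∀ v, L.mul c (AB.1 v) ≤ iter L T A N v := by
    intro v
    by_cases hv : v ∈ hC1f.toFinset
    · exact le_trans (hnf v) (iter_mono L T A v (Finset.le_sup hv))
    · have h0 : AB.1 v = 0 := by
        rw [Set.Finite.mem_toFinset (hs := hC1f)] at hv
        simpa [Set.mem_setOf_eq, not_not] using hv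
      rw [h0, mul_bot]
      exact zero_le' _
  have hc' : c ≤ Subdeg L AB.1 (iter L T A N) :=
    le_iInf fun v => (L.adjoint _ _ _).mp (hall v)
  have hstep : L.mul c (AB.2 p) ≤ iter L T A (N+1) p := by
    calc L.mul c (AB.2 p) ≤ L.mul (Subdeg L AB.1 (iter L T A N)) (AB.2 p) :=
          mul_mono_l L _ hc'
      _ ≤ iter L T A (N+1) p := by
          show _ ≤ iter L T A N p ⊔ ⨆ AB' ∈ T, L.mul (Subdeg L AB'.1 (iter L T A N)) (AB'.2 p)
          exact le_sup_of_le_right (le_iSup₂_of_le AB hAB le_rfl)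
  exact (L.adjoint _ _ _).mp
    (le_trans hstep (le_iSup (fun n => iter L T A n p) (N+1)))

end RFALaux


/-- least-model characterization of provability degrees:
    |A⇒B|_Σ = S(B, A^ω_Σ). -/
theorem provDeg_eq_subdeg_omegaIter {V : Type} [Countable V] (L : RStr)
    (hrc : L.RationallyClosed) (hd : L.ImpSupDistrib)
    (T : Set ((V → UI) × (V → UI))) (hT : IsTheory T)
    (A B : V → UI) (hAf : FinSet A) (hAr : RatSet A) (hBf : FinSet B) (hBr : RatSet B) :
    provDeg L T A B = Subdeg L B (omegaIter L T A) := by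
  open RFALaux in
  apply le_antisymm
  · -- provability ≤ semantic degree in the least model
    apply sSup_le
    rintro c ⟨hc, hpf⟩
    have hm := omega_model L T hd hT A
    have h1 : Subdeg L A (omegaIter L T A) = 1 :=
      Subdeg_eq_one L (fun p => le_iSup (fun n => iter L T A n p) 0)
    have h2 := sound L T hpf _ hm
    rw [h1] at h2
    apply le_iInf
    intro p
    have h3 : (1:UI) ≤ L.imp (csmul L c B p) (omegaIter L T A p) :=
      le_trans h2 (Subdeg_le' L _ _ p)
    have h4 : L.mul c (B p) ≤ omegaIter L T A p := le_of_one_le_imp L h3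
    exact (L.adjoint _ _ _).mp h4
  · apply le_of_forall_rat_lt
    intro c hc hlt
    have hω : ∀ p, omegaIter L T A p ≤ synCl L T A p := fun p =>
      iSup_le fun n => iter_le_synCl L T hrc hd hT hAf hAr n p
    have h1 : c < Subdeg L B (synCl L T A) :=
      lt_of_lt_of_le hlt (Subdeg_mono L B hω)
    have h2 : Proves L T A (csmul L c B) := star L T hrc hd hAf hAr hBf hBr hc h1
    exact le_sSup ⟨hc, h2⟩
end
end
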